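/- arXiv:1703.04339 — 5 statements merged into one kernel-verified Lean document; each statement's English description precedes it below -/
import Mathlib

section
/- Let (Y_i, g_i^{i+1}) be an inverse sequence of compact metrizable spaces with limit Y and limit projections g_{j,∞} : Y → Y_j. Let E be a real Banach space, U ⊆ E an open set, P ⊆ U a subset with a continuous retraction r : U → P (r restricted to P is the identity), with P given the metric d induced from E. Let μ : Y → P be a continuous map and ε > 0. Then there exists i ∈ ℕ such that for all j ≥ i there is a continuous map f : Y_j → P with d(f(g_{j,∞}(y)), μ(y)) < ε for every y ∈ Y. -/
/-!
A partition of unity on the compact Hausdorff space `∏ Y_i` gives a continuous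
`M : ∏ Y_i → E` uniformly close to `μ` on the limit. As `r` is uniformly close to the identity
near the compact set `range μ ⊆ P`, `r ∘ M` is defined on an open neighbourhood of the limit,
`P`-valued, and `ε/2`-close to `μ` there. The pairs of partial threads of length `n` that agree
in the first `n` coordinates form compact sets decreasing to the diagonal of the limit, so for
large `n`, `r ∘ M` varies by less than `ε/2` on such pairs. Completing a point of `Y_j`, `j ≥ n`,
to a partial thread and applying `r ∘ M` gives the required map.
-/

open Set Filter Topology

theorem IsClosed.exists_continuousMap_dist_lt {X E : Type*} [TopologicalSpace X]
    [NormalSpace X] [ParacompactSpace X] [SeminormedAddCommGroup E] [NormedSpace ℝ E]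
    {S : Set X} (hS : IsClosed S) (μ : S → E) (hμ : Continuous μ) {η : ℝ} (hη : 0 < η) :
    ∃ M : C(X, E), ∀ x : S, dist (M x) (μ x) < η := by
  obtain ⟨M, hM⟩ := exists_continuous_forall_mem_convex_of_local_const
    (t := fun x => ⋂ hx : x ∈ S, Metric.ball (μ ⟨x, hx⟩) η)
    (fun x => convex_iInter fun _ => convex_ball _ _) fun x => by
      by_cases hx : x ∈ S
      · obtain ⟨u, hu, huμ⟩ := (mem_nhds_subtype S ⟨x, hx⟩ _).1
          (hμ.continuousAt.preimage_mem_nhds (Metric.ball_mem_nhds (μ ⟨x, hx⟩) hη))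
        refine ⟨μ ⟨x, hx⟩, mem_of_superset hu fun y hy => mem_iInter.2 fun hyS => ?_⟩
        exact Metric.mem_ball_comm.1 (huμ (show (⟨y, hyS⟩ : S).1 ∈ u from hy))
      · exact ⟨0, mem_of_superset (hS.isOpen_compl.mem_nhds hx) fun y hy =>
          mem_iInter.2 fun hyS => absurd hyS hy⟩
  exact ⟨M, fun x => mem_iInter.1 (hM x) x.2⟩

theorem IsCompact.exists_pos_forall_dist_lt {α β : Type*} [PseudoMetricSpace α]
    [PseudoMetricSpace β] {C : Set α} (hC : IsCompact C) {ρ : α → β}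
    (hρ : ∀ c ∈ C, ContinuousAt ρ c) {ε : ℝ} (hε : 0 < ε) :
    ∃ δ > 0, ∀ c ∈ C, ∀ v, dist c v < δ → dist (ρ c) (ρ v) < ε := by
  obtain ⟨δ, hδ, hδρ⟩ := Metric.mem_uniformity_dist.1
    (hC.uniformContinuousAt_of_continuousAt ρ hρ (Metric.dist_mem_uniformity hε))
  exact ⟨δ, hδ, fun c hc v hcv => hδρ hcv hc⟩

theorem exists_continuousOn_retraction {α : Type*} [TopologicalSpace α] {U P : Set α}
    (hPU : P ⊆ U) (r : U → α) (hr : Continuous r) (hrP : ∀ u, r u ∈ P)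
    (hret : ∀ u : U, (u : α) ∈ P → r u = u) :
    ∃ ρ : α → α, ContinuousOn ρ U ∧ MapsTo ρ U P ∧ ∀ v ∈ P, ρ v = v := by
  classical
  let ρ : α → α := fun v => if h : v ∈ U then r ⟨v, h⟩ else v
  have hρr : ∀ u : U, ρ u = r u := fun u => dif_pos u.2
  refine ⟨ρ, continuousOn_iff_continuous_domRestrict.2 ((funext hρr : U.domRestrict ρ = r) ▸ hr),
    fun u hu => hρr ⟨u, hu⟩ ▸ hrP _, fun v hv => ?_⟩
  exact hρr ⟨v, hPU hv⟩ ▸ hret ⟨v, hPU hv⟩ hv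

theorem IsClosed.exists_isOpen_continuousOn_dist_lt {X E : Type*} [TopologicalSpace X]
    [CompactSpace X] [T2Space X] [SeminormedAddCommGroup E] [NormedSpace ℝ E] {S : Set X}
    (hS : IsClosed S) (μ : S → E) (hμ : Continuous μ) {U P : Set E} (hU : IsOpen U)
    (hPU : P ⊆ U) (hμP : ∀ x, μ x ∈ P) {ρ : E → E} (hρ : ContinuousOn ρ U) (hρP : MapsTo ρ U P)
    (hρ_fix : ∀ v ∈ P, ρ v = v) {ε : ℝ} (hε : 0 < ε) :
    ∃ V, IsOpen V ∧ S ⊆ V ∧ ∃ G : X → E, ContinuousOn G V ∧ MapsTo G V P ∧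
      ∀ x : S, dist (G x) (μ x) < ε := by
  have : CompactSpace S := isCompact_iff_compactSpace.1 hS.isCompact
  have hC : IsCompact (range μ) := isCompact_range hμ
  have hCU : range μ ⊆ U := range_subset_iff.2 fun x => hPU (hμP x)
  obtain ⟨δ₀, hδ₀, hδ₀U⟩ := hC.exists_thickening_subset_open hU hCU
  obtain ⟨δ₁, hδ₁, hδ₁ρ⟩ := hC.exists_pos_forall_dist_lt
    (fun c hc => hρ.continuousAt (hU.mem_nhds (hCU hc))) hε
  obtain ⟨M, hM⟩ := hS.exists_continuousMap_dist_lt μ hμ (lt_min hδ₀ hδ₁)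
  refine ⟨M ⁻¹' U, hU.preimage M.continuous, fun x hx => ?_, ρ ∘ M,
    hρ.comp M.continuous.continuousOn (mapsTo_preimage _ _), fun x hx => hρP hx, fun x => ?_⟩
  · exact hδ₀U (Metric.mem_thickening_iff.2
      ⟨μ ⟨x, hx⟩, mem_range_self _, (hM ⟨x, hx⟩).trans_le (min_le_left _ _)⟩)
  · have := hδ₁ρ (μ x) (mem_range_self x) (M x)
      (by rw [dist_comm]; exact (hM x).trans_le (min_le_right _ _))
    rwa [hρ_fix _ (hμP x), dist_comm] at this

theorem isEmpty_add_of_isEmpty {Y : ℕ → Type*} (g : ∀ i, Y (i + 1) → Y i) {i : ℕ}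
    (hi : IsEmpty (Y i)) : ∀ k, IsEmpty (Y (i + k))
  | 0 => hi
  | k + 1 => ⟨fun z => (isEmpty_add_of_isEmpty g hi k).false (g (i + k) z)⟩

section InverseSequence

variable {Y : ℕ → Type*} (g : ∀ i, Y (i + 1) → Y i)

theorem isClosed_setOf_forall_bond_eq [∀ i, TopologicalSpace (Y i)] [∀ i, T2Space (Y i)]
    (hg : ∀ i, Continuous (g i)) : IsClosed {y : ∀ i, Y i | ∀ i, g i (y (i + 1)) = y i} := by
  simp only [ofPred_forall]
  exact isClosed_iInter fun i =>
    isClosed_eq ((hg i).comp (continuous_apply _)) (continuous_apply i)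

def partialThreads (n : ℕ) : Set (∀ i, Y i) := {x | ∀ m < n, g m (x (m + 1)) = x m}

theorem partialThreads_antitone : Antitone (partialThreads g) :=
  fun _ _ hab _ hx m hm => hx m (hm.trans_le hab)

theorem isClosed_partialThreads [∀ i, TopologicalSpace (Y i)] [∀ i, T2Space (Y i)]
    (hg : ∀ i, Continuous (g i)) (n : ℕ) : IsClosed (partialThreads g n) := by
  simp only [partialThreads, ofPred_forall]
  exact isClosed_iInter fun m => isClosed_iInter fun _ =>
    isClosed_eq ((hg m).comp (continuous_apply _)) (continuous_apply m)

theorem exists_forall_partialThreads_dist_lt [∀ i, TopologicalSpace (Y i)]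
    [∀ i, CompactSpace (Y i)] [∀ i, T2Space (Y i)] (hg : ∀ i, Continuous (g i))
    {β : Type*} [PseudoMetricSpace β] {V : Set (∀ i, Y i)} (hV : IsOpen V)
    (hSV : ∀ y : ∀ i, Y i, (∀ i, g i (y (i + 1)) = y i) → y ∈ V) {G : (∀ i, Y i) → β}
    (hG : ContinuousOn G V) {ε : ℝ} (hε : 0 < ε) :
    ∃ n, ∀ x ∈ partialThreads g n, ∀ x' ∈ partialThreads g n, (∀ m < n, x m = x' m) →
      x ∈ V ∧ dist (G x) (G x') < ε := by
  let D : ℕ → Set ((∀ i, Y i) × (∀ i, Y i)) := fun n =>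
    {q | q.1 ∈ partialThreads g n ∧ q.2 ∈ partialThreads g n ∧ ∀ m < n, q.1 m = q.2 m}
  have hD_closed : ∀ n, IsClosed (D n) := fun n => by
    refine ((isClosed_partialThreads g hg n).preimage continuous_fst).inter
      (((isClosed_partialThreads g hg n).preimage continuous_snd).inter ?_)
    show IsClosed {q : (∀ i, Y i) × (∀ i, Y i) | ∀ m < n, q.1 m = q.2 m}
    simp only [ofPred_forall]
    exact isClosed_iInter fun m => isClosed_iInter fun _ =>
      isClosed_eq ((continuous_apply m).comp continuous_fst)
        ((continuous_apply m).comp continuous_snd)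
  have hD_anti : Antitone D := fun a b hab q ⟨h₁, h₂, h⟩ =>
    ⟨partialThreads_antitone g hab h₁, partialThreads_antitone g hab h₂,
      fun m hm => h m (hm.trans_le hab)⟩
  have hnhds : ∀ q ∈ ⋂ n, D n, {q | q.1 ∈ V ∧ dist (G q.1) (G q.2) < ε} ∈ 𝓝 q := by
    rintro ⟨x, x'⟩ hq
    have hq : ∀ n, (x, x') ∈ D n := mem_iInter.1 hq
    obtain rfl : x = x' := funext fun m => (hq (m + 1)).2.2 m (lt_add_one m)
    have hxV : x ∈ V := hSV x fun i => (hq (i + 1)).1 i (lt_add_one i)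
    have hGx : ContinuousAt G x := hG.continuousAt (hV.mem_nhds hxV)
    have hdist : ContinuousAt (fun q : (∀ i, Y i) × (∀ i, Y i) => dist (G q.1) (G q.2)) (x, x) :=
      (hGx.comp (x := (x, x)) continuousAt_fst).dist (hGx.comp (x := (x, x)) continuousAt_snd)
    exact inter_mem (continuousAt_fst.preimage_mem_nhds (hV.mem_nhds hxV))
      (hdist.preimage_mem_nhds (Iio_mem_nhds (by simpa using hε)))
  obtain ⟨n, hn⟩ := exists_subset_nhds_of_isCompact' hD_anti.directed_ge
    (fun n => (hD_closed n).isCompact) hD_closed hnhds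
  exact ⟨n, fun x hx x' hx' hxx' => hn (a := (x, x')) ⟨hx, hx', hxx'⟩⟩

/-- `partialThread g p j z = (g_0^j z, …, g_{j-1}^j z, z, p (j + 1), p (j + 2), …)`. -/
noncomputable def partialThread (p : ∀ i, Y i) : ∀ j, Y j → ∀ m, Y m
  | 0, z => fun m => Nat.casesOn m z fun n => p (n + 1)
  | j + 1, z => fun m =>
      if h : m = j + 1 then cast (congrArg Y h.symm) z else partialThread p j (g j z) m

variable {g}

theorem partialThread_succ (p : ∀ i, Y i) (j : ℕ) (z : Y (j + 1)) (m : ℕ) :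
    partialThread g p (j + 1) z m =
      if h : m = j + 1 then cast (congrArg Y h.symm) z else partialThread g p j (g j z) m :=
  rfl

theorem partialThread_self (p : ∀ i, Y i) : ∀ j (z : Y j), partialThread g p j z j = z
  | 0, _ => rfl
  | j + 1, z => by rw [partialThread_succ, dif_pos rfl]; exact cast_eq _ z

theorem partialThread_apply_of_le (p : ∀ i, Y i) {y : ∀ i, Y i}
    (hy : ∀ i, g i (y (i + 1)) = y i) : ∀ {j m}, m ≤ j → partialThread g p j (y j) m = y m
  | 0, 0, _ => rfl
  | j + 1, m, hm => by
      rw [partialThread_succ]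
      rcases hm.eq_or_lt with rfl | hm
      · rw [dif_pos rfl]; rfl
      · rw [dif_neg hm.ne, hy j]
        exact partialThread_apply_of_le p hy (Nat.le_of_lt_succ hm)

theorem partialThread_mem_partialThreads (p : ∀ i, Y i) :
    ∀ j (z : Y j), partialThread g p j z ∈ partialThreads g j
  | 0, _, m, hm => absurd hm m.not_lt_zero
  | j + 1, z, m, hm => by
      rcases (Nat.le_of_lt_succ hm).eq_or_lt with rfl | hm
      · rw [partialThread_self, partialThread_succ, dif_neg (by omega), partialThread_self]
      · rw [partialThread_succ _ _ z, dif_neg (by omega), partialThread_succ _ _ z,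
          dif_neg (by omega)]
        exact partialThread_mem_partialThreads p j (g j z) m hm

theorem continuous_partialThread [∀ i, TopologicalSpace (Y i)] (hg : ∀ i, Continuous (g i))
    (p : ∀ i, Y i) : ∀ j, Continuous (partialThread g p j)
  | 0 => continuous_pi fun m => by
      cases m with
      | zero => exact continuous_id
      | succ n => exact continuous_const
  | j + 1 => continuous_pi fun m => by
      by_cases h : m = j + 1
      · subst h
        simp only [partialThread_succ, cast_eq]
        exact continuous_id
      · simp only [partialThread_succ, dif_neg h]
        exact ((continuous_apply m).comp (continuous_partialThread hg p j)).comp (hg j)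

end InverseSequence

theorem approx_factorization_through_term_general
    (Y : ℕ → Type*) [∀ i, TopologicalSpace (Y i)] [∀ i, CompactSpace (Y i)]
    [∀ i, TopologicalSpace.MetrizableSpace (Y i)]
    (g : ∀ i, Y (i + 1) → Y i) (hg : ∀ i, Continuous (g i))
    {E : Type*} [NormedAddCommGroup E] [NormedSpace ℝ E]
    (U : Set E) (hU : IsOpen U) (P : Set E) (hPU : P ⊆ U)
    (r : U → E) (hr : Continuous r) (hrP : ∀ u, r u ∈ P)
    (hret : ∀ u : U, (u : E) ∈ P → r u = u)
    (μ : {y : ∀ i, Y i // ∀ i, g i (y (i + 1)) = y i} → E)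
    (hμc : Continuous μ) (hμP : ∀ y, μ y ∈ P)
    (ε : ℝ) (hε : 0 < ε) :
    ∃ i : ℕ, ∀ k : ℕ, ∃ f : Y (i + k) → E, Continuous f ∧ (∀ z, f z ∈ P) ∧
      ∀ y : {y : ∀ i, Y i // ∀ i, g i (y (i + 1)) = y i},
        dist (f (y.1 (i + k))) (μ y) < ε := by
  by_cases hne : ∀ i, Nonempty (Y i)
  swap
  · obtain ⟨i, hi⟩ := not_forall.1 hne
    have := isEmpty_add_of_isEmpty g (not_nonempty_iff.1 hi)
    exact ⟨i, fun k => ⟨isEmptyElim, continuous_of_discreteTopology, isEmptyElim,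
      fun y => isEmptyElim (y.1 (i + k))⟩⟩
  obtain ⟨ρ, hρ, hρP, hρ_fix⟩ := exists_continuousOn_retraction hPU r hr hrP hret
  obtain ⟨V, hV, hSV, G, hG, hGP, hGμ⟩ := IsClosed.exists_isOpen_continuousOn_dist_lt
    (isClosed_setOf_forall_bond_eq g hg) μ hμc hU hPU hμP hρ hρP hρ_fix (half_pos hε)
  obtain ⟨n, hn⟩ := exists_forall_partialThreads_dist_lt g hg hV (fun y hy => hSV hy) hG
    (half_pos hε)
  let e : ∀ k, Y (n + k) → ∀ i, Y i := fun k => partialThread g (fun i => (hne i).some) (n + k)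
  have he : ∀ k z, e k z ∈ partialThreads g n := fun k z =>
    partialThreads_antitone g (Nat.le_add_right n k) (partialThread_mem_partialThreads _ _ z)
  have heV : ∀ k z, e k z ∈ V := fun k z => (hn _ (he k z) _ (he k z) fun _ _ => rfl).1
  refine ⟨n, fun k => ⟨G ∘ e k, hG.comp_continuous (continuous_partialThread hg _ _) (heV k),
    fun z => hGP (heV k z), fun y => ?_⟩⟩
  have hy : dist (G (e k (y.1 (n + k)))) (G y.1) < ε / 2 :=
    (hn _ (he k _) y.1 (fun m _ => y.2 m) fun m hm => partialThread_apply_of_le _ y.2 (by omega)).2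
  calc dist (G (e k (y.1 (n + k)))) (μ y)
      ≤ dist (G (e k (y.1 (n + k)))) (G y.1) + dist (G y.1) (μ y) := dist_triangle _ _ _
    _ < ε / 2 + ε / 2 := add_lt_add hy (hGμ y)
    _ = ε := add_halves ε

/-- a version of (R1) of Mardešić–Segal.  Let `(Y_i, g_i^{i+1})` be an
inverse sequence of compact metrizable spaces with limit `Y`, let `P` be a retract of an open
subset `U` of a Banach space `E` (so `P` is an ANR), with the metric induced from `E`.
For every continuous `μ : Y → P` and every `ε > 0` there is an `i` such that for every
`j ≥ i` (i.e. `j = i + k`) there is a continuous map `f : Y_j → P` with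
`dist (f (g_{j,∞} y)) (μ y) < ε` for all `y ∈ Y`. -/
theorem approx_factorization_through_term
    (Y : ℕ → Type*) [∀ i, TopologicalSpace (Y i)] [∀ i, CompactSpace (Y i)]
    [∀ i, TopologicalSpace.MetrizableSpace (Y i)]
    (g : ∀ i, Y (i + 1) → Y i) (hg : ∀ i, Continuous (g i))
    {E : Type*} [NormedAddCommGroup E] [NormedSpace ℝ E] [CompleteSpace E]
    (U : Set E) (hU : IsOpen U) (P : Set E) (hPU : P ⊆ U)
    (r : U → E) (hr : Continuous r) (hrP : ∀ u, r u ∈ P)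
    (hret : ∀ u : U, (u : E) ∈ P → r u = u)
    (μ : {y : ∀ i, Y i // ∀ i, g i (y (i + 1)) = y i} → E)
    (hμc : Continuous μ) (hμP : ∀ y, μ y ∈ P)
    (ε : ℝ) (hε : 0 < ε) :
    ∃ i : ℕ, ∀ k : ℕ, ∃ f : Y (i + k) → E, Continuous f ∧ (∀ z, f z ∈ P) ∧
      ∀ y : {y : ∀ i, Y i // ∀ i, g i (y (i + 1)) = y i},
        dist (f (y.1 (i + k))) (μ y) < ε :=
  approx_factorization_through_term_general Y g hg U hU P hPU r hr hrP hret μ hμc hμP ε hε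
end

section
/- Let X be a compact metrizable space and let T be a finite geometric simplicial complex in ℝ^n with polyhedron P = |T|. Then the set [X, P] of homotopy classes of continuous maps from X to P is countable. -/
/-!
The polyhedron `P = |T|` is a compact neighbourhood retract of `ℝⁿ`. Closed convex sets are
retracts (nearest-point projection), and the union of two closed neighbourhood retracts whose
intersection is one is again one: extend the retraction of `A ∩ B` to retractions near `A` and
near `B`, and glue them along the set where the distances to `A` and to `B` agree. If
`r : U → P` is such a retraction and the `δ`-neighbourhood of `P` lies in `U`, two maps `X → P`
at uniform distance `< δ` are homotopic through `r` applied to the straight-line homotopy. Since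
`C(X, P)` is separable, countably many `δ`-balls cover it, so there are countably many classes.
-/

open Set Metric

theorem Convex.exists_lipschitzWith_retraction {F : Type*} [NormedAddCommGroup F]
    [InnerProductSpace ℝ F] [CompleteSpace F] {K : Set F} (hK : Convex ℝ K) (hKc : IsClosed K)
    (hne : K.Nonempty) :
    ∃ r : F → F, LipschitzWith 1 r ∧ (∀ x, r x ∈ K) ∧ EqOn r id K := by
  choose r hrK hr using exists_norm_eq_iInf_of_complete_convex hne hKc.isComplete hK
  have hvar : ∀ u, ∀ w ∈ K, inner ℝ (u - r u) (w - r u) ≤ 0 := fun u =>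
    (norm_eq_iInf_iff_real_inner_le_zero hK (hrK u)).1 (hr u)
  refine ⟨r, LipschitzWith.of_dist_le_mul fun x y => ?_, hrK, fun x hx => ?_⟩
  · have hsum : inner ℝ (x - r x) (r y - r x) + inner ℝ (y - r y) (r x - r y) =
        ‖r x - r y‖ ^ 2 - inner ℝ (x - y) (r x - r y) := by
      rw [← real_inner_self_eq_norm_sq]
      simp only [inner_sub_left, inner_sub_right, real_inner_comm]
      ring
    have hsq : ‖r x - r y‖ * ‖r x - r y‖ ≤ ‖x - y‖ * ‖r x - r y‖ := by
      nlinarith [hvar x (r y) (hrK y), hvar y (r x) (hrK x), real_inner_le_norm (x - y) (r x - r y)]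
    rw [NNReal.coe_one, one_mul, dist_eq_norm, dist_eq_norm]
    rcases (norm_nonneg (r x - r y)).eq_or_lt with h | h
    · rw [← h]; exact norm_nonneg _
    · exact le_of_mul_le_mul_right hsq h
  · have h := hvar x x hx
    rw [real_inner_self_eq_norm_sq] at h
    have h0 : ‖x - r x‖ = 0 := pow_eq_zero_iff two_ne_zero |>.1 (le_antisymm h (sq_nonneg _))
    exact (sub_eq_zero.1 (norm_eq_zero.1 h0)).symm

def IsNeighborhoodRetract {α : Type*} [TopologicalSpace α] (M : Set α) : Prop :=
  ∃ U, IsOpen U ∧ M ⊆ U ∧ ∃ r : α → α, ContinuousOn r U ∧ MapsTo r U M ∧ EqOn r id M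

theorem isNeighborhoodRetract_empty {α : Type*} [TopologicalSpace α] :
    IsNeighborhoodRetract (∅ : Set α) :=
  ⟨∅, isOpen_empty, subset_rfl, id, continuousOn_empty _, mapsTo_empty _ _, eqOn_empty _ _⟩

theorem Convex.isNeighborhoodRetract {E : Type*} [NormedAddCommGroup E] [NormedSpace ℝ E]
    [FiniteDimensional ℝ E] {K : Set E} (hK : Convex ℝ K) (hKc : IsClosed K) :
    IsNeighborhoodRetract K := by
  rcases K.eq_empty_or_nonempty with rfl | ⟨x₀, hx₀⟩
  · exact isNeighborhoodRetract_empty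
  let e : E ≃L[ℝ] EuclideanSpace ℝ (Fin (Module.finrank ℝ E)) :=
    .ofFinrankEq finrank_euclideanSpace_fin.symm
  obtain ⟨r, hr, hrK, hrid⟩ := (hK.linear_preimage e.symm.toLinearMap)
    |>.exists_lipschitzWith_retraction (hKc.preimage e.symm.continuous) ⟨e x₀, by simpa using hx₀⟩
  refine ⟨univ, isOpen_univ, subset_univ K, e.symm ∘ r ∘ e,
    (e.symm.continuous.comp (hr.continuous.comp e.continuous)).continuousOn,
    fun x _ => hrK (e x), fun x hx => ?_⟩
  simp [hrid (show e.symm (e x) ∈ K by simpa using hx)]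

universe u

theorem IsNeighborhoodRetract.exists_extension {α : Type u} [TopologicalSpace α] [NormalSpace α]
    [TietzeExtension.{u, u} α] {A S : Set α} (hA : IsNeighborhoodRetract A) (hAc : IsClosed A)
    (hSc : IsClosed S) {g : α → α} (hg : ContinuousOn g S) (hgS : MapsTo g S A)
    (hgA : EqOn g id (A ∩ S)) :
    ∃ V, IsOpen V ∧ A ∪ S ⊆ V ∧
      ∃ G : α → α, ContinuousOn G V ∧ MapsTo G V A ∧ EqOn G id A ∧ EqOn G g S := by
  classical
  obtain ⟨U, hU, hAU, r, hr, hrU, hrA⟩ := hA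
  set f := A.piecewise id g
  have hfA : EqOn f id A := piecewise_eqOn A id g
  have hfS : EqOn f g S := fun x hx => by
    by_cases hxA : x ∈ A
    · rw [hfA hxA, hgA ⟨hxA, hx⟩]
    · exact piecewise_eq_of_notMem A id g hxA
  have hf : ContinuousOn f (A ∪ S) :=
    (continuousOn_id.congr hfA).union_of_isClosed (hg.congr hfS) hAc hSc
  have hfAS : MapsTo f (A ∪ S) A := by
    rintro x (hx | hx)
    · rw [hfA hx]; exact hx
    · rw [hfS hx]; exact hgS hx
  obtain ⟨F, hF⟩ :=
    ContinuousMap.exists_restrict_eq (hAc.union hSc) ⟨(A ∪ S).domRestrict f, hf.domRestrict⟩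
  have hFf : EqOn F f (A ∪ S) := fun x hx => DFunLike.congr_fun hF ⟨x, hx⟩
  refine ⟨F ⁻¹' U, hU.preimage F.continuous, fun x hx => ?_, r ∘ F,
    hr.comp F.continuous.continuousOn (mapsTo_preimage F U), fun x hx => hrU hx, ?_, ?_⟩
  · rw [mem_preimage, hFf hx]; exact hAU (hfAS hx)
  · intro x hx
    rw [Function.comp_apply, hFf (Or.inl hx), hfA hx]; exact hrA hx
  · intro x hx
    rw [Function.comp_apply, hFf (Or.inr hx), hfS hx]; exact hrA (hgS hx)

theorem isNeighborhoodRetract_union_of_retractions {α : Type*} [EMetricSpace α] {A B : Set α}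
    (hAc : IsClosed A) (hBc : IsClosed B) {V₁ V₂ O : Set α} (hV₁ : IsOpen V₁) (hV₂ : IsOpen V₂)
    (hO : IsOpen O) (hAV₁ : A ⊆ V₁) (hBV₂ : B ⊆ V₂) (hABO : A ∩ B ⊆ O) {G₁ G₂ : α → α}
    (hG₁ : ContinuousOn G₁ V₁) (hG₂ : ContinuousOn G₂ V₂) (hG₁A : MapsTo G₁ V₁ A)
    (hG₂B : MapsTo G₂ V₂ B) (hG₁id : EqOn G₁ id A) (hG₂id : EqOn G₂ id B)
    (hG : ∀ x ∈ O, infEDist x A = infEDist x B → G₁ x = G₂ x) :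
    IsNeighborhoodRetract (A ∪ B) := by
  have cA : Continuous (infEDist · A) := continuous_infEDist
  have cB : Continuous (infEDist · B) := continuous_infEDist
  let U := {x | infEDist x A < infEDist x B} ∩ V₁ ∪ {x | infEDist x B < infEDist x A} ∩ V₂ ∪
    O ∩ V₁ ∩ V₂
  have hU₁ : ∀ x ∈ U, infEDist x A ≤ infEDist x B → x ∈ V₁ := by
    rintro x ((h | ⟨h, -⟩) | h) hle
    exacts [h.2, absurd hle (not_le.2 h), h.1.2]
  have hU₂ : ∀ x ∈ U, infEDist x B ≤ infEDist x A → x ∈ V₂ := by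
    rintro x ((⟨h, -⟩ | h) | h) hle
    exacts [absurd hle (not_le.2 h), h.2, h.2]
  have hUO : ∀ x ∈ U, infEDist x A = infEDist x B → x ∈ O := by
    rintro x ((⟨h, -⟩ | ⟨h, -⟩) | h) heq
    exacts [absurd heq h.ne, absurd heq.symm h.ne, h.1.1]
  have hA_lt : ∀ x ∈ A, x ∉ B → infEDist x A < infEDist x B := fun x hxA hxB => by
    rw [infEDist_zero_of_mem hxA]
    exact infEDist_pos_iff_notMem_closure.2 (by rwa [hBc.closure_eq])
  have hB_lt : ∀ x ∈ B, x ∉ A → infEDist x B < infEDist x A := fun x hxB hxA => by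
    rw [infEDist_zero_of_mem hxB]
    exact infEDist_pos_iff_notMem_closure.2 (by rwa [hAc.closure_eq])
  have hABU : A ∪ B ⊆ U := by
    intro x hx
    by_cases hxA : x ∈ A <;> by_cases hxB : x ∈ B
    · exact Or.inr ⟨⟨hABO ⟨hxA, hxB⟩, hAV₁ hxA⟩, hBV₂ hxB⟩
    · exact Or.inl (Or.inl ⟨hA_lt x hxA hxB, hAV₁ hxA⟩)
    · exact Or.inl (Or.inr ⟨hB_lt x hxB hxA, hBV₂ hxB⟩)
    · exact absurd hx (by simp [hxA, hxB])
  refine ⟨U, ((isOpen_lt cA cB).inter hV₁ |>.union <| (isOpen_lt cB cA).inter hV₂).union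
    ((hO.inter hV₁).inter hV₂), hABU,
    fun x => if infEDist x A ≤ infEDist x B then G₁ x else G₂ x, ?_, ?_, ?_⟩
  · refine ContinuousOn.if (fun x hx => hG x (hUO x hx.1 (frontier_le_subset_eq cA cB hx.2)) ?_)
      (hG₁.mono fun x hx => hU₁ x hx.1 ((isClosed_le cA cB).closure_subset hx.2))
      (hG₂.mono fun x hx => hU₂ x hx.1 ?_)
    · exact frontier_le_subset_eq cA cB hx.2
    · simp only [not_le] at hx
      exact closure_lt_subset_le cB cA hx.2
  · intro x hx
    by_cases h : infEDist x A ≤ infEDist x B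
    · simpa [h] using Or.inl (hG₁A (hU₁ x hx h))
    · simpa [h] using Or.inr (hG₂B (hU₂ x hx (not_le.1 h).le))
  · rintro x hx
    by_cases hxA : x ∈ A
    · simp [infEDist_zero_of_mem hxA, hG₁id hxA]
    · have hxB : x ∈ B := hx.resolve_left hxA
      simp [not_le.2 (hB_lt x hxB hxA), hG₂id hxB]

theorem IsNeighborhoodRetract.union {α : Type u} [EMetricSpace α] [TietzeExtension.{u, u} α]
    {A B : Set α} (hA : IsNeighborhoodRetract A) (hB : IsNeighborhoodRetract B)
    (hAB : IsNeighborhoodRetract (A ∩ B)) (hAc : IsClosed A) (hBc : IsClosed B) :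
    IsNeighborhoodRetract (A ∪ B) := by
  obtain ⟨W, hW, hABW, rC, hrC, hrCW, hrCid⟩ := hAB
  obtain ⟨O, hO, hABO, hOW⟩ := normal_exists_closure_subset (hAc.inter hBc) hW hABW
  set S := {x | infEDist x A = infEDist x B} ∩ closure O
  have hSc : IsClosed S :=
    (isClosed_eq continuous_infEDist continuous_infEDist).inter isClosed_closure
  have hrCS : MapsTo rC S (A ∩ B) := hrCW.mono_left fun x hx => hOW hx.2
  have hAS : A ∩ S ⊆ A ∩ B := fun x ⟨hxA, hxS⟩ => ⟨hxA, (mem_iff_infEDist_zero_of_closed hBc).2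
    ((hxS.1 : infEDist x A = _).symm.trans (infEDist_zero_of_mem hxA))⟩
  have hBS : B ∩ S ⊆ A ∩ B := fun x ⟨hxB, hxS⟩ => ⟨(mem_iff_infEDist_zero_of_closed hAc).2
    ((hxS.1 : infEDist x A = _).trans (infEDist_zero_of_mem hxB)), hxB⟩
  obtain ⟨V₁, hV₁, hASV₁, G₁, hG₁, hG₁A, hG₁id, hG₁S⟩ := hA.exists_extension hAc hSc
    (hrC.mono fun x hx => hOW hx.2) (hrCS.mono_right inter_subset_left) (hrCid.mono hAS)
  obtain ⟨V₂, hV₂, hBSV₂, G₂, hG₂, hG₂B, hG₂id, hG₂S⟩ := hB.exists_extension hBc hSc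
    (hrC.mono fun x hx => hOW hx.2) (hrCS.mono_right inter_subset_right) (hrCid.mono hBS)
  refine isNeighborhoodRetract_union_of_retractions hAc hBc hV₁ hV₂ hO
    (subset_union_left.trans hASV₁) (subset_union_left.trans hBSV₂) hABO hG₁ hG₂ hG₁A hG₂B
    hG₁id hG₂id fun x hxO hx => ?_
  rw [hG₁S ⟨hx, subset_closure hxO⟩, hG₂S ⟨hx, subset_closure hxO⟩]

theorem isNeighborhoodRetract_biUnion_of_convex {E : Type*} [NormedAddCommGroup E]
    [NormedSpace ℝ E] [FiniteDimensional ℝ E] {ι : Type*} {s : Set ι} (hs : s.Finite)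
    {K : ι → Set E} (hK : ∀ i ∈ s, Convex ℝ (K i)) (hKc : ∀ i ∈ s, IsClosed (K i)) :
    IsNeighborhoodRetract (⋃ i ∈ s, K i) := by
  induction s, hs using Set.Finite.induction_on generalizing K with
  | empty => simpa using isNeighborhoodRetract_empty
  | @insert a s _ hs ih =>
    simp only [forall_mem_insert] at hK hKc
    rw [biUnion_insert]
    refine (hK.1.isNeighborhoodRetract hKc.1).union (ih hK.2 hKc.2) ?_ hKc.1
      (hs.isClosed_biUnion hKc.2)
    rw [inter_iUnion₂]
    exact ih (fun i hi => hK.1.inter (hK.2 i hi)) fun i hi => hKc.1.inter (hKc.2 i hi)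

theorem Geometry.SimplicialComplex.isCompact_space_of_finite {E : Type*} [NormedAddCommGroup E]
    [NormedSpace ℝ E] (T : SimplicialComplex ℝ E) (hT : T.faces.Finite) : IsCompact T.space :=
  hT.isCompact_biUnion fun s _ => s.finite_toSet.isCompact_convexHull ℝ

theorem Geometry.SimplicialComplex.isNeighborhoodRetract_space_of_finite {E : Type*}
    [NormedAddCommGroup E] [NormedSpace ℝ E] [FiniteDimensional ℝ E] (T : SimplicialComplex ℝ E)
    (hT : T.faces.Finite) : IsNeighborhoodRetract T.space :=
  isNeighborhoodRetract_biUnion_of_convex hT (fun _ _ => convex_convexHull ℝ _)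
    fun s _ => (s.finite_toSet.isCompact_convexHull ℝ).isClosed

theorem ContinuousMap.homotopic_of_segment_subset {E X : Type*} [NormedAddCommGroup E]
    [NormedSpace ℝ E] [TopologicalSpace X] {M U : Set E} {r : E → E} (hr : ContinuousOn r U)
    (hrU : MapsTo r U M) (hrM : EqOn r id M) {f g : C(X, M)}
    (hfg : ∀ x, segment ℝ (f x : E) (g x) ⊆ U) : f.Homotopic g := by
  let H : unitInterval × X → E := fun p => AffineMap.lineMap (f p.2 : E) (g p.2) (p.1 : ℝ)
  have hH : Continuous H := by fun_prop
  have hHU : ∀ p, H p ∈ U := fun p => hfg p.2 (lineMap_mem_segment ℝ _ _ p.1.2)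
  exact ⟨{ toFun := fun p => ⟨r (H p), hrU (hHU p)⟩
           continuous_toFun := (hr.comp_continuous hH hHU).subtype_mk _
           map_zero_left := fun x => Subtype.ext (by simp [H, hrM (f x).2])
           map_one_left := fun x => Subtype.ext (by simp [H, hrM (g x).2]) }⟩

theorem IsNeighborhoodRetract.exists_pos_homotopic_of_dist_lt {E : Type*} [NormedAddCommGroup E]
    [NormedSpace ℝ E] {M : Set E} (hM : IsNeighborhoodRetract M) (hMc : IsCompact M)
    (X : Type*) [TopologicalSpace X] [CompactSpace X] :
    ∃ δ > 0, ∀ f g : C(X, M), dist f g < δ → f.Homotopic g := by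
  obtain ⟨U, hU, hMU, r, hr, hrU, hrM⟩ := hM
  obtain ⟨δ, hδ, hδU⟩ := hMc.exists_thickening_subset_open hU hMU
  refine ⟨δ, hδ, fun f g hfg => ContinuousMap.homotopic_of_segment_subset hr hrU hrM fun x => ?_⟩
  have hx : (g x : E) ∈ ball (f x : E) δ := by
    rw [mem_ball, ← Subtype.dist_eq, dist_comm]
    exact (ContinuousMap.dist_apply_le_dist x).trans_lt hfg
  exact ((convex_ball _ _).segment_subset (mem_ball_self hδ) hx).trans
    ((ball_subset_thickening (f x).2 δ).trans hδU)

theorem countable_quot_of_dist_lt {Y : Type*} [PseudoMetricSpace Y]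
    [TopologicalSpace.SeparableSpace Y] {r : Y → Y → Prop} {δ : ℝ} (hδ : 0 < δ)
    (hr : ∀ x y, dist x y < δ → r x y) : Countable (Quot r) := by
  obtain ⟨D, hDc, hD⟩ := TopologicalSpace.exists_countable_dense Y
  refine Set.countable_univ_iff.1 ((hDc.image (Quot.mk r)).mono fun q _ => ?_)
  induction q using Quot.ind with
  | mk y =>
    obtain ⟨z, hzD, hzy⟩ := hD.exists_mem_open isOpen_ball ⟨y, mem_ball_self hδ⟩
    exact ⟨z, hzD, Quot.sound (hr z y hzy)⟩

/-- For a compact metrizable space `X` and a finite geometric simplicial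
complex `T` in `ℝⁿ` with polyhedron `P = |T|`, the set `[X, P]` of homotopy classes of
continuous maps `X → P` is countable. -/
theorem countable_homotopy_classes_of_maps_to_polyhedron
    (X : Type*) [TopologicalSpace X] [CompactSpace X] [TopologicalSpace.MetrizableSpace X]
    {n : ℕ} (T : Geometry.SimplicialComplex ℝ (Fin n → ℝ)) (hT : T.faces.Finite) :
    Countable (Quot (ContinuousMap.Homotopic (X := X) (Y := T.space))) := by
  let : MetricSpace X := TopologicalSpace.metrizableSpaceMetric X
  obtain ⟨δ, hδ, hhom⟩ := (T.isNeighborhoodRetract_space_of_finite hT)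
    |>.exists_pos_homotopic_of_dist_lt (T.isCompact_space_of_finite hT) X
  exact countable_quot_of_dist_lt hδ hhom
end

section
/- Let X ⊆ I^∞ be compact and nonempty. Then there exist a strictly increasing sequence (n_j) in ℕ with n_1 = 1 and a sequence (P_j) of compact polyhedra (each P_j the polyhedron of a finite geometric simplicial complex in ℝ^{n_j}) with P_j ⊆ I^{n_j}, such that: (1) for all j ∈ ℕ, X ⊆ int_{I^∞}(P_j × I^∞_{n_j}) and P_j × I^∞_{n_j} ⊆ N(X, 2/j); and (2) for all j ≥ 2, p_{n_{j-1}}^{n_j}(P_j) ⊆ int_{I^{n_{j-1}}}(P_{j-1}). -/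
open Set Filter Topology

noncomputable section

/-- The Hilbert cube `I^∞ = ∏_{i ≥ 1} [0,1]`; the index `i : ℕ` represents coordinate `i + 1`. -/
abbrev Iinf : Type := ℕ → unitInterval

/-- The metric `ρ(x, y) = Σ_{i=1}^∞ |x_i − y_i| / 2^i` on the Hilbert cube (whose topology is
the product topology carried by `Iinf`). -/
def rho (x y : Iinf) : ℝ := ∑' i : ℕ, |((x i : ℝ)) - (y i : ℝ)| / 2 ^ (i + 1)

/-- `I^k`, identified with the subset `I^k × {0}` of `I^∞` (all coordinates beyond `k` zero). -/
def cubeFin (k : ℕ) : Set Iinf := {x | ∀ i, k ≤ i → x i = 0}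

/-- `p_{k,∞} : I^∞ → I^k`, projection to the first `k` coordinates.  For `j ≤ k` it also
serves as `p_j^k : I^k → I^j`. -/
def proj (k : ℕ) (x : Iinf) : Iinf := fun i => if i < k then x i else 0

/-- `P × I^∞_k = {x ∈ I^∞ : p_{k,∞}(x) ∈ P}`, for `P ⊆ I^k`. -/
def cyl (k : ℕ) (P : Set Iinf) : Set Iinf := {x | proj k x ∈ P}

/-- `N(A, ε)`, the open `ε`-neighborhood of `A` in `(I^∞, ρ)`. -/
def nbhd (A : Set Iinf) (ε : ℝ) : Set Iinf := {x | ∃ a ∈ A, rho x a < ε}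

/-- The interior of `P` relative to the subspace `I^m ⊆ I^∞`. -/
def relInterior (m : ℕ) (P : Set Iinf) : Set Iinf :=
  {x ∈ cubeFin m | ∃ U : Set Iinf, IsOpen U ∧ x ∈ U ∧ U ∩ cubeFin m ⊆ P}

/-!
The polyhedra come from the Freudenthal–Kuhn triangulation of `ℝᵏ`, whose simplices are the
chains `v₀ < ⋯ < vᵣ` of lattice points with `vᵣ ≤ v₀ + 1`.  Every `x` is the average over
`c ∈ (0, 1]` of the lattice point `kuhnVertex x c` obtained by rounding up exactly the coordinates
of `x` with fractional part `≥ c`, and these points form the only Kuhn simplex containing `x` in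
its relative interior.  This uniqueness yields both the intersection axiom and affine
independence.

Take `n j = j` and for `P j` the union of the Kuhn simplices of mesh `1 / m`, `m = 3 ^ (j + 1)`,
in `Iʲ` whose vertices lie within `2 / m` of `p_j(X)`.  It contains the `1 / m`-neighbourhood of
`p_j(X)` and lies in its `3 / m`-neighbourhood, which gives the nesting; the coordinates beyond
`j` add at most `2⁻ʲ` to `ρ`.
-/

lemma IsChain.isLeast_of_minimal {α : Type*} [Preorder α] {s : Set α} {a : α}
    (hs : IsChain (· ≤ ·) s) (h : Minimal (· ∈ s) a) : IsLeast s a :=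
  ⟨h.1, fun _ hb => (hs.total h.1 hb).elim id (h.2 hb)⟩

lemma IsChain.isGreatest_of_maximal {α : Type*} [Preorder α] {s : Set α} {a : α}
    (hs : IsChain (· ≤ ·) s) (h : Maximal (· ∈ s) a) : IsGreatest s a :=
  ⟨h.1, fun _ hb => (hs.total hb h.1).elim id (h.2 hb)⟩

section Comap

variable {𝕜 E F : Type*} [Ring 𝕜] [PartialOrder 𝕜] [AddCommGroup E] [Module 𝕜 E]
  [AddCommGroup F] [Module 𝕜 F]

lemma LinearEquiv.apply_mem_convexHull_map_iff (e : F ≃ₗ[𝕜] E) {s : Finset F} {x : F} :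
    e x ∈ convexHull 𝕜 ↑(s.map e.toEquiv.toEmbedding) ↔ x ∈ convexHull 𝕜 (s : Set F) := by
  rw [Finset.coe_map, Equiv.coe_toEmbedding, LinearEquiv.coe_toEquiv, ← LinearEquiv.coe_coe,
    ← LinearMap.image_convexHull]
  exact e.injective.mem_set_image

namespace Geometry.SimplicialComplex

def comap (K : SimplicialComplex 𝕜 E) (e : F ≃ₗ[𝕜] E) : SimplicialComplex 𝕜 F where
  faces := {s | s.map e.toEquiv.toEmbedding ∈ K.faces}
  indep {s} hs := by
    refine AffineIndependent.of_comp e.toLinearMap.toAffineMap ?_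
    exact (K.indep hs).comp_embedding
      (⟨fun v => ⟨e v, Finset.mem_map_of_mem e.toEquiv.toEmbedding v.2⟩,
        fun _ _ h => Subtype.ext (e.injective (congrArg Subtype.val h))⟩ :
        s ↪ s.map e.toEquiv.toEmbedding)
  isRelLowerSet_faces s hs := ⟨Finset.map_nonempty.1 (K.nonempty_of_mem_faces hs),
    fun _ hts ht => K.down_closed hs (Finset.map_subset_map.2 hts) ht.map⟩
  inter_subset_convexHull {s t} hs ht x hx := by
    classical
    have := K.inter_subset_convexHull hs ht
      ⟨e.apply_mem_convexHull_map_iff.2 hx.1, e.apply_mem_convexHull_map_iff.2 hx.2⟩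
    rwa [← Finset.coe_inter, ← Finset.map_inter, e.apply_mem_convexHull_map_iff,
      Finset.coe_inter] at this

variable {K : SimplicialComplex 𝕜 E} {e : F ≃ₗ[𝕜] E}

lemma mem_space_comap {x : F} : x ∈ (K.comap e).space ↔ e x ∈ K.space := by
  simp only [mem_space_iff]
  constructor
  · rintro ⟨s, hs, hx⟩
    exact ⟨_, hs, e.apply_mem_convexHull_map_iff.2 hx⟩
  · rintro ⟨t, ht, hx⟩
    have ht' : (t.map e.symm.toEquiv.toEmbedding).map e.toEquiv.toEmbedding = t := by
      ext; simp
    refine ⟨t.map e.symm.toEquiv.toEmbedding, show _ ∈ K.faces by rwa [ht'], ?_⟩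
    rwa [← e.apply_mem_convexHull_map_iff, ht']

lemma finite_faces_comap (hK : K.faces.Finite) : (K.comap e).faces.Finite :=
  show (Finset.map e.toEquiv.toEmbedding ⁻¹' K.faces).Finite from
    hK.preimage (Finset.map_injective _).injOn

end Geometry.SimplicialComplex

end Comap

lemma Geometry.SimplicialComplex.isCompact_space {E : Type*} [AddCommGroup E] [Module ℝ E]
    [TopologicalSpace E] [IsTopologicalAddGroup E] [ContinuousSMul ℝ E] [T2Space E]
    {K : Geometry.SimplicialComplex ℝ E} (hK : K.faces.Finite) : IsCompact K.space :=
  hK.isCompact_biUnion fun s _ => s.finite_toSet.isCompact_convexHull ℝ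

section KuhnVertex

open MeasureTheory

variable {ι : Type*}

def kuhnVertex (x : ι → ℝ) (c : ℝ) : ι → ℝ :=
  fun i => ⌊x i⌋ + if c ≤ Int.fract (x i) then 1 else 0

def kuhnFace (x : ι → ℝ) : Set (ι → ℝ) := kuhnVertex x '' Ioc 0 1

lemma kuhnVertex_antitone (x : ι → ℝ) : Antitone (kuhnVertex x) := fun c c' hcc' i => by
  simp only [kuhnVertex]
  split_ifs with h h' <;> linarith

lemma eq_floor_or_eq_floor_add_one_of_mem_kuhnFace {x v : ι → ℝ} (hv : v ∈ kuhnFace x)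
    (i : ι) : v i = ⌊x i⌋ ∨ v i = ⌊x i⌋ + 1 := by
  obtain ⟨c, -, rfl⟩ := hv
  simp only [kuhnVertex]
  split_ifs <;> simp

lemma floor_le_and_le_ceil_of_mem_kuhnFace {x v : ι → ℝ} (hv : v ∈ kuhnFace x) (i : ι) :
    ⌊x i⌋ ≤ v i ∧ v i ≤ ⌈x i⌉ := by
  obtain ⟨c, ⟨hc0, -⟩, rfl⟩ := hv
  simp only [kuhnVertex]
  split_ifs with h
  · have hceil := Int.ceil_eq_add_one_sub_fract (hc0.trans_le h).ne'
    rw [Int.fract] at hceil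
    constructor <;> linarith
  · simpa using Int.floor_le_ceil (x i)

lemma kuhnFace_finite [Finite ι] (x : ι → ℝ) : (kuhnFace x).Finite :=
  (Finite.pi fun i => toFinite {(⌊x i⌋ : ℝ), (⌊x i⌋ : ℝ) + 1}).subset fun _ hv i _ =>
    eq_floor_or_eq_floor_add_one_of_mem_kuhnFace hv i

lemma kuhnVertex_apply_eq_indicator (x : ι → ℝ) (c : ℝ) (i : ι) :
    kuhnVertex x c i = ⌊x i⌋ + (Iic (Int.fract (x i))).indicator 1 c := by
  simp [kuhnVertex, indicator_apply]

lemma integrableOn_kuhnVertex_apply (x : ι → ℝ) (i : ι) :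
    IntegrableOn (fun c => kuhnVertex x c i) (Ioc 0 1) := by
  simp only [kuhnVertex_apply_eq_indicator]
  exact (integrable_const _).add ((integrable_const 1).indicator measurableSet_Iic)

lemma integral_kuhnVertex [Fintype ι] (x : ι → ℝ) :
    ∫ c in Ioc (0 : ℝ) 1, kuhnVertex x c = x := by
  ext i
  rw [eval_integral (integrableOn_kuhnVertex_apply x)]
  simp only [kuhnVertex_apply_eq_indicator]
  rw [integral_add (integrable_const _) ((integrable_const 1).indicator measurableSet_Iic),
    integral_indicator_one measurableSet_Iic, Measure.real,
    Measure.restrict_apply measurableSet_Iic, Iic_inter_Ioc_of_le (Int.fract_lt_one _).le,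
    Real.volume_Ioc, sub_zero, ENNReal.toReal_ofReal (Int.fract_nonneg _)]
  simp [Int.floor_add_fract]

theorem mem_convexHull_kuhnFace [Fintype ι] (x : ι → ℝ) : x ∈ convexHull ℝ (kuhnFace x) := by
  have : IsProbabilityMeasure (volume.restrict (Ioc (0 : ℝ) 1)) := ⟨by simp⟩
  have := (convex_convexHull ℝ (kuhnFace x)).integral_mem
    ((kuhnFace_finite x).isClosed_convexHull ℝ)
    (ae_restrict_of_forall_mem measurableSet_Ioc fun c hc => subset_convexHull ℝ _ ⟨c, hc, rfl⟩)
    (Integrable.of_eval (integrableOn_kuhnVertex_apply x))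
  rwa [integral_kuhnVertex] at this

end KuhnVertex

section KuhnSimplex

variable {ι : Type*} [Fintype ι]

structure IsKuhnSimplex (s : Set (ι → ℝ)) : Prop where
  isChain : IsChain (· ≤ ·) s
  exists_intCast : ∀ v ∈ s, ∀ i, ∃ z : ℤ, v i = z
  dist_le_one : ∀ u ∈ s, ∀ v ∈ s, dist u v ≤ 1

lemma isKuhnSimplex_kuhnFace (x : ι → ℝ) : IsKuhnSimplex (kuhnFace x) where
  isChain := (kuhnVertex_antitone x).isChain_image (isChain_of_trichotomous _)
  exists_intCast v hv i := by
    rcases eq_floor_or_eq_floor_add_one_of_mem_kuhnFace hv i with h | h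
    · exact ⟨_, h⟩
    · exact ⟨⌊x i⌋ + 1, by rw [h]; push_cast; rfl⟩
  dist_le_one u hu v hv := (dist_pi_le_iff zero_le_one).2 fun i => by
    rw [Real.dist_eq, abs_le]
    rcases eq_floor_or_eq_floor_add_one_of_mem_kuhnFace hu i with h | h <;>
      rcases eq_floor_or_eq_floor_add_one_of_mem_kuhnFace hv i with h' | h' <;>
      rw [h, h'] <;> constructor <;> linarith

lemma dist_lt_one_of_mem_kuhnFace {x v : ι → ℝ} (hv : v ∈ kuhnFace x) : dist v x < 1 :=
  (dist_pi_lt_iff one_pos).2 fun i => by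
    obtain ⟨h₁, h₂⟩ := floor_le_and_le_ceil_of_mem_kuhnFace hv i
    rw [Real.dist_eq, abs_sub_lt_iff]
    constructor
    · linarith [Int.ceil_lt_add_one (x i)]
    · linarith [Int.sub_one_lt_floor (x i)]

namespace IsKuhnSimplex

open Finset
open scoped Classical

section Chain

variable {s t : Set (ι → ℝ)}

lemma mono (hs : IsKuhnSimplex s) (hts : t ⊆ s) : IsKuhnSimplex t :=
  ⟨hs.isChain.mono hts, fun v hv => hs.exists_intCast v (hts hv),
    fun u hu v hv => hs.dist_le_one u (hts hu) v (hts hv)⟩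

lemma eq_or_eq_add_one (hs : IsKuhnSimplex s) {b v : ι → ℝ} (hb : b ∈ s) (hv : v ∈ s)
    (hbv : b ≤ v) (i : ι) : v i = b i ∨ v i = b i + 1 := by
  obtain ⟨z, hz⟩ := hs.exists_intCast v hv i
  obtain ⟨y, hy⟩ := hs.exists_intCast b hb i
  have h₁ : v i - b i ≤ 1 :=
    (le_abs_self _).trans ((dist_le_pi_dist v b i).trans (hs.dist_le_one v hv b hb))
  have h₀ := hbv i
  rw [hz, hy] at h₀ h₁ ⊢
  have : z - y ≤ 1 := by exact_mod_cast h₁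
  have : y ≤ z := Int.cast_le.mp h₀
  rcases (by omega : z = y ∨ z = y + 1) with rfl | rfl <;> simp

lemma eq_add_one_of_le (hs : IsKuhnSimplex s) {b u v : ι → ℝ} (hb : b ∈ s) (hv : v ∈ s)
    (hbv : b ≤ v) (huv : u ≤ v) {i : ι} (hu : u i = b i + 1) : v i = b i + 1 :=
  (hs.eq_or_eq_add_one hb hv hbv i).resolve_left fun h => by linarith [huv i]

end Chain

variable {F : Finset (ι → ℝ)} {w : (ι → ℝ) → ℝ} {b : ι → ℝ}

lemma floor_and_fract_sum_smul (hF : IsKuhnSimplex (F : Set (ι → ℝ)))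
    (hb : IsLeast (F : Set (ι → ℝ)) b) (hw : ∀ v ∈ F, 0 < w v) (hw1 : ∑ v ∈ F, w v = 1)
    (i : ι) :
    (⌊(∑ v ∈ F, w v • v) i⌋ : ℝ) = b i ∧
      Int.fract ((∑ v ∈ F, w v • v) i) = ∑ v ∈ F with v i = b i + 1, w v := by
  set μ := ∑ v ∈ F with v i = b i + 1, w v
  have hx : (∑ v ∈ F, w v • v) i = b i + μ := by
    rw [Finset.sum_apply]
    simp only [Pi.smul_apply, smul_eq_mul]
    calc ∑ v ∈ F, w v * v i = ∑ v ∈ F, (w v * b i + if v i = b i + 1 then w v else 0) :=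
          sum_congr rfl fun v hv => by
            rcases hF.eq_or_eq_add_one hb.1 hv (hb.2 hv) i with h | h <;> simp [h, mul_add]
      _ = b i + μ := by rw [sum_add_distrib, ← sum_mul, hw1, one_mul, ← sum_filter]
  have hμ : 0 ≤ μ ∧ μ < 1 := by
    refine ⟨sum_nonneg fun v hv => (hw v (mem_filter.1 hv).1).le, ?_⟩
    have hsub : {v ∈ F | v i = b i + 1} ⊆ F.erase b := fun v hv => by
      rw [mem_filter] at hv
      exact mem_erase.2 ⟨by rintro rfl; linarith [hv.2], hv.1⟩
    have := sum_le_sum_of_subset_of_nonneg hsub fun v hv _ => (hw v (mem_of_mem_erase hv)).le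
    linarith [add_sum_erase F w hb.1, hw b hb.1]
  obtain ⟨z, hz⟩ := hF.exists_intCast b hb.1 i
  rw [hx, hz, Int.floor_intCast_add, Int.fract_intCast_add, Int.floor_eq_zero_iff.2 hμ,
    Int.fract_eq_self.2 hμ]
  simp

lemma apply_eq_add_one_iff (hF : IsKuhnSimplex (F : Set (ι → ℝ)))
    (hb : IsLeast (F : Set (ι → ℝ)) b) (hw : ∀ v ∈ F, 0 < w v) {v : ι → ℝ} (hv : v ∈ F)
    (i : ι) :
    v i = b i + 1 ↔ ∑ u ∈ F with v ≤ u, w u ≤ ∑ u ∈ F with u i = b i + 1, w u := by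
  constructor
  · intro hvi
    refine sum_le_sum_of_subset_of_nonneg (fun u hu => ?_)
      fun u hu _ => (hw u (mem_filter.1 hu).1).le
    rw [mem_filter] at hu ⊢
    exact ⟨hu.1, hF.eq_add_one_of_le hb.1 hu.1 (hb.2 hu.1) hu.2 hvi⟩
  · intro hle
    by_contra hvi
    replace hvi := (hF.eq_or_eq_add_one hb.1 hv (hb.2 hv) i).resolve_right hvi
    have hsub : {u ∈ F | u i = b i + 1} ⊆ {u ∈ F | v ≤ u}.erase v := fun u hu => by
      rw [mem_filter] at hu
      refine mem_erase.2 ⟨by rintro rfl; linarith [hu.2], mem_filter.2 ⟨hu.1, ?_⟩⟩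
      exact (hF.isChain.total hv hu.1).resolve_right fun huv => by linarith [huv i, hu.2]
    have := sum_le_sum_of_subset_of_nonneg hsub
      fun u hu _ => (hw u (mem_filter.1 (mem_of_mem_erase hu)).1).le
    linarith [add_sum_erase _ w (mem_filter.2 ⟨hv, le_rfl⟩), hw v hv]

lemma kuhnVertex_sum_filter_le (hF : IsKuhnSimplex (F : Set (ι → ℝ)))
    (hb : IsLeast (F : Set (ι → ℝ)) b) (hw : ∀ v ∈ F, 0 < w v) (hw1 : ∑ v ∈ F, w v = 1)
    {v : ι → ℝ} (hv : v ∈ F) :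
    kuhnVertex (∑ u ∈ F, w u • u) (∑ u ∈ F with v ≤ u, w u) = v := by
  funext i
  obtain ⟨hfloor, hfract⟩ := hF.floor_and_fract_sum_smul hb hw hw1 i
  have key := hF.apply_eq_add_one_iff hb hw hv i
  rw [kuhnVertex, hfloor, hfract]
  split_ifs with hle
  · exact (key.2 hle).symm
  · simpa using ((hF.eq_or_eq_add_one hb.1 hv (hb.2 hv) i).resolve_right (mt key.1 hle)).symm

lemma mem_kuhnFace_sum_smul (hF : IsKuhnSimplex (F : Set (ι → ℝ)))
    (hb : IsLeast (F : Set (ι → ℝ)) b) (hw : ∀ v ∈ F, 0 < w v) (hw1 : ∑ v ∈ F, w v = 1)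
    {v : ι → ℝ} (hv : v ∈ F) : v ∈ kuhnFace (∑ u ∈ F, w u • u) := by
  refine ⟨∑ u ∈ F with v ≤ u, w u, ⟨?_, ?_⟩, hF.kuhnVertex_sum_filter_le hb hw hw1 hv⟩
  · exact (hw v hv).trans_le (single_le_sum (fun u hu => (hw u (mem_filter.1 hu).1).le)
      (mem_filter.2 ⟨hv, le_rfl⟩))
  · exact hw1 ▸ sum_le_sum_of_subset_of_nonneg (filter_subset _ _) fun u hu _ => (hw u hu).le

lemma kuhnVertex_sum_smul_mem (hF : IsKuhnSimplex (F : Set (ι → ℝ)))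
    (hb : IsLeast (F : Set (ι → ℝ)) b) (hw : ∀ v ∈ F, 0 < w v) (hw1 : ∑ v ∈ F, w v = 1)
    {c : ℝ} (hc : c ∈ Set.Ioc 0 1) : kuhnVertex (∑ u ∈ F, w u • u) c ∈ F := by
  -- `v` is the highest vertex whose upper weight is still at least `c`.
  have hbG : b ∈ {u ∈ F | c ≤ ∑ t ∈ F with u ≤ t, w t} := by
    rw [mem_filter, filter_true_of_mem fun t ht => hb.2 ht, hw1]
    exact ⟨hb.1, hc.2⟩
  obtain ⟨v, hvG⟩ := Finset.exists_maximal ⟨b, hbG⟩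
  have hv := (hF.isChain.mono (filter_subset _ F)).isGreatest_of_maximal hvG
  have hvF : v ∈ F := (mem_filter.1 hv.1).1
  suffices kuhnVertex (∑ u ∈ F, w u • u) c
      = kuhnVertex (∑ u ∈ F, w u • u) (∑ u ∈ F with v ≤ u, w u) by
    rw [this, hF.kuhnVertex_sum_filter_le hb hw hw1 hvF]
    exact hvF
  funext i
  simp only [kuhnVertex, (hF.floor_and_fract_sum_smul hb hw hw1 i).2]
  refine congrArg _ (if_congr ⟨fun hcμ => ?_, (mem_filter.1 hv.1).2.trans⟩ rfl rfl)
  obtain ⟨s, hs⟩ := Finset.exists_minimal (nonempty_of_sum_ne_zero (hc.1.trans_le hcμ).ne')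
  replace hs := (hF.isChain.mono (filter_subset _ F)).isLeast_of_minimal hs
  obtain ⟨hsF, hsi⟩ := mem_filter.1 hs.1
  have hμs : ∑ u ∈ F with u i = b i + 1, w u ≤ ∑ u ∈ F with s ≤ u, w u :=
    sum_le_sum_of_subset_of_nonneg (fun u hu => mem_filter.2 ⟨(mem_filter.1 hu).1, hs.2 hu⟩)
      fun u hu _ => (hw u (mem_filter.1 hu).1).le
  have hsv : s ≤ v := hv.2 (mem_filter.2 ⟨hsF, hcμ.trans hμs⟩)
  exact (hF.apply_eq_add_one_iff hb hw hvF i).1 (hF.eq_add_one_of_le hb.1 hvF (hb.2 hvF) hsv hsi)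

theorem coe_eq_kuhnFace (hF : IsKuhnSimplex (F : Set (ι → ℝ))) (hw : ∀ v ∈ F, 0 < w v)
    (hw1 : ∑ v ∈ F, w v = 1) : (F : Set (ι → ℝ)) = kuhnFace (∑ v ∈ F, w v • v) := by
  obtain ⟨b, hb⟩ := F.exists_minimal (nonempty_of_sum_ne_zero (hw1.symm ▸ one_ne_zero))
  replace hb := hF.isChain.isLeast_of_minimal hb
  refine Set.Subset.antisymm (fun v hv => hF.mem_kuhnFace_sum_smul hb hw hw1 hv) ?_
  rintro _ ⟨c, hc, rfl⟩
  exact hF.kuhnVertex_sum_smul_mem hb hw hw1 hc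

theorem kuhnFace_subset_of_mem_convexHull (hF : IsKuhnSimplex (F : Set (ι → ℝ))) {x : ι → ℝ}
    (hx : x ∈ convexHull ℝ (F : Set (ι → ℝ))) : kuhnFace x ⊆ F := by
  obtain ⟨w, hw0, hw1, rfl⟩ := Finset.mem_convexHull'.1 hx
  have hsum : ∑ v ∈ F with w v ≠ 0, w v • v = ∑ v ∈ F, w v • v :=
    sum_filter_of_ne fun _ _ => left_ne_zero_of_smul
  have hG := (hF.mono (coe_subset.2 (filter_subset _ F))).coe_eq_kuhnFace
    (fun v hv => (hw0 v (mem_filter.1 hv).1).lt_of_ne' (mem_filter.1 hv).2)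
    (by rwa [sum_filter_ne_zero])
  rw [hsum] at hG
  exact hG ▸ coe_subset.2 (filter_subset _ F)

theorem convexHull_inter_subset {G : Finset (ι → ℝ)} (hF : IsKuhnSimplex (F : Set (ι → ℝ)))
    (hG : IsKuhnSimplex (G : Set (ι → ℝ))) :
    convexHull ℝ ↑F ∩ convexHull ℝ ↑G ⊆ convexHull ℝ ((F : Set (ι → ℝ)) ∩ G) :=
  fun x hx => convexHull_mono (subset_inter (hF.kuhnFace_subset_of_mem_convexHull hx.1)
    (hG.kuhnFace_subset_of_mem_convexHull hx.2)) (mem_convexHull_kuhnFace x)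

theorem affineIndependent (hF : IsKuhnSimplex (F : Set (ι → ℝ))) :
    AffineIndependent ℝ ((↑) : F → ι → ℝ) := by
  rcases F.eq_empty_or_nonempty with rfl | hne
  · exact affineIndependent_of_subsingleton ℝ _
  by_contra hind
  -- The barycentre of `F` lies in the relative interior of `F`, but also in a proper face.
  have hFx := hF.coe_eq_kuhnFace (w := fun _ => (F.card : ℝ)⁻¹) (fun _ _ => by positivity)
    (by rw [sum_const, nsmul_eq_mul, mul_inv_cancel₀ (by exact_mod_cast hne.card_pos.ne')])
  obtain ⟨⟨y, hy⟩, hyx⟩ :=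
    Caratheodory.mem_convexHull_erase hind (hFx ▸ mem_convexHull_kuhnFace _)
  have := (hF.mono (coe_subset.2 (F.erase_subset y))).kuhnFace_subset_of_mem_convexHull hyx
    (hFx ▸ hy)
  simp at this

end IsKuhnSimplex

def kuhnComplex (S : Set (ι → ℝ)) : Geometry.SimplicialComplex ℝ (ι → ℝ) where
  faces := {F | F.Nonempty ∧ ↑F ⊆ S ∧ IsKuhnSimplex (F : Set (ι → ℝ))}
  indep hF := hF.2.2.affineIndependent
  isRelLowerSet_faces _ hF := ⟨hF.1, fun _ hGF hG =>
    ⟨hG, (Finset.coe_subset.2 hGF).trans hF.2.1, hF.2.2.mono (Finset.coe_subset.2 hGF)⟩⟩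
  inter_subset_convexHull hF hG := hF.2.2.convexHull_inter_subset hG.2.2

variable {S : Set (ι → ℝ)}

lemma kuhnComplex_faces_finite (hS : S.Finite) : (kuhnComplex S).faces.Finite :=
  hS.toFinset.powerset.finite_toSet.subset fun _ hF =>
    Finset.mem_powerset.2 fun _ hv => hS.mem_toFinset.2 (hF.2.1 hv)

lemma kuhnComplex_space_subset {C : Set (ι → ℝ)} (hC : Convex ℝ C) (hSC : S ⊆ C) :
    (kuhnComplex S).space ⊆ C := by
  simp only [Geometry.SimplicialComplex.space, iUnion_subset_iff]
  exact fun F hF => convexHull_min (hF.2.1.trans hSC) hC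

lemma exists_dist_le_one_of_mem_kuhnComplex_space {p : ι → ℝ}
    (hp : p ∈ (kuhnComplex S).space) : ∃ v ∈ S, dist p v ≤ 1 := by
  obtain ⟨F, ⟨⟨v, hv⟩, hFS, hF⟩, hpF⟩ := Geometry.SimplicialComplex.mem_space_iff.1 hp
  exact ⟨v, hFS hv, convexHull_min
    (fun u hu => Metric.mem_closedBall.2 (hF.dist_le_one u hu v hv)) (convex_closedBall v 1) hpF⟩

lemma mem_kuhnComplex_space_of_kuhnFace_subset {p : ι → ℝ} (hp : kuhnFace p ⊆ S) :
    p ∈ (kuhnComplex S).space := by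
  refine Geometry.SimplicialComplex.mem_space_iff.2
    ⟨(kuhnFace_finite p).toFinset, ⟨?_, ?_, ?_⟩, ?_⟩
  · exact (kuhnFace_finite p).toFinset_nonempty.2 ⟨_, mem_image_of_mem _ ⟨one_pos, le_rfl⟩⟩
  all_goals rw [Finite.coe_toFinset]
  · exact hp
  · exact isKuhnSimplex_kuhnFace p
  · exact mem_convexHull_kuhnFace p

end KuhnSimplex

def coords (k : ℕ) (x : Iinf) : Fin k → ℝ := fun i => (x i : ℝ)

lemma continuous_coords (k : ℕ) : Continuous (coords k) :=
  continuous_pi fun i => continuous_subtype_val.comp (continuous_apply (i : ℕ))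

lemma coords_proj (k : ℕ) (x : Iinf) : coords k (proj k x) = coords k x :=
  funext fun i => by simp [coords, proj]

lemma dist_coords_le_of_le {k n : ℕ} (hkn : k ≤ n) (x y : Iinf) :
    dist (coords k x) (coords k y) ≤ dist (coords n x) (coords n y) :=
  (dist_pi_le_iff dist_nonneg).2 fun i => dist_le_pi_dist (coords n x) (coords n y) (i.castLE hkn)

lemma proj_mem_cubeFin (k : ℕ) (x : Iinf) : proj k x ∈ cubeFin k := fun i hi => by
  simp [proj, hi.not_gt]

lemma proj_eq_self {k : ℕ} {x : Iinf} (hx : x ∈ cubeFin k) : proj k x = x := by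
  funext i
  by_cases hi : i < k
  · simp [proj, hi]
  · simp [proj, hi, hx i (not_lt.1 hi)]

lemma isClosed_cubeFin (k : ℕ) : IsClosed (cubeFin k) := by
  have : cubeFin k = ⋂ i ∈ Ici k, {x : Iinf | x i = 0} := by ext; simp [cubeFin]
  rw [this]
  exact isClosed_biInter fun i _ => isClosed_eq (continuous_apply i) continuous_const

lemma rho_le_dist_coords_add (x y : Iinf) (k : ℕ) :
    rho x y ≤ dist (coords k x) (coords k y) + 1 / 2 ^ k := by
  set d := dist (coords k x) (coords k y)
  set f : ℕ → ℝ := fun i => |(x i : ℝ) - y i| / 2 ^ (i + 1)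
  have hf_le : ∀ i c, |(x i : ℝ) - y i| ≤ c → f i ≤ c / 2 / 2 ^ i := fun i c h => by
    simp only [f, pow_succ, div_div, mul_comm (2 : ℝ)]
    gcongr
  have hf1 : ∀ i, f i ≤ 1 / 2 / 2 ^ i := fun i => hf_le i 1 <|
    abs_sub_le_iff.2 ⟨by linarith [(x i).2.2, (y i).2.1], by linarith [(x i).2.1, (y i).2.2]⟩
  have hf : Summable f := (summable_geometric_two' 1).of_nonneg_of_le (fun i => by positivity) hf1
  rw [rho, ← hf.sum_add_tsum_nat_add k]
  gcongr
  · calc ∑ i ∈ Finset.range k, f i ≤ ∑ i ∈ Finset.range k, d / 2 / 2 ^ i :=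
          Finset.sum_le_sum fun i hi => hf_le i d <| by
            have := dist_le_pi_dist (coords k x) (coords k y) ⟨i, Finset.mem_range.1 hi⟩
            rwa [Real.dist_eq] at this
      _ ≤ ∑' i, d / 2 / 2 ^ i :=
          (summable_geometric_two' d).sum_le_tsum _ fun i _ => by positivity
      _ = d := tsum_geometric_two' d
  · calc ∑' i, f (i + k) ≤ ∑' i : ℕ, 1 / 2 ^ k / 2 / 2 ^ i :=
          (hf.comp_injective (add_left_injective k)).tsum_le_tsum (fun i => by
            calc f (i + k) ≤ 1 / 2 / 2 ^ (i + k) := hf1 _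
              _ = _ := by rw [pow_add]; field_simp) (summable_geometric_two' _)
      _ = 1 / 2 ^ k := tsum_geometric_two' _

lemma nbhd_mono {A : Set Iinf} {ε δ : ℝ} (h : ε ≤ δ) : nbhd A ε ⊆ nbhd A δ :=
  fun _ ⟨a, ha, hxa⟩ => ⟨a, ha, hxa.trans_le h⟩

def nearSet (X : Set Iinf) (k : ℕ) (r : ℝ) : Set Iinf :=
  ⋃ x ∈ X, coords k ⁻¹' Metric.ball (coords k x) r

lemma isOpen_nearSet (X : Set Iinf) (k : ℕ) (r : ℝ) : IsOpen (nearSet X k r) :=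
  isOpen_biUnion fun _ _ => Metric.isOpen_ball.preimage (continuous_coords k)

lemma subset_nearSet (X : Set Iinf) (k : ℕ) {r : ℝ} (hr : 0 < r) : X ⊆ nearSet X k r :=
  fun _ hx => mem_biUnion hx (Metric.mem_ball_self hr)

section PolyNbhd

variable (X : Set Iinf) (k m : ℕ)

def latticeNear : Set (Fin k → ℝ) :=
  {v | (∀ i, ∃ z : ℤ, v i = z) ∧ v ∈ pi univ (fun _ => Icc 0 (m : ℝ)) ∧
    ∃ x ∈ X, dist v ((m : ℝ) • coords k x) < 2}

def polyNbhd : Set Iinf :=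
  {y ∈ cubeFin k | (m : ℝ) • coords k y ∈ (kuhnComplex (latticeNear X k m)).space}

lemma latticeNear_finite : (latticeNear X k m).Finite := by
  refine (Finite.pi fun _ => (finite_Icc (0 : ℤ) m).image ((↑) : ℤ → ℝ)).subset ?_
  rintro v ⟨hint, hcube, -⟩ i -
  obtain ⟨z, hz⟩ := hint i
  obtain ⟨h₀, h₁⟩ := hcube i trivial
  rw [hz] at h₀ h₁
  exact ⟨z, ⟨by exact_mod_cast h₀, by exact_mod_cast h₁⟩, hz.symm⟩

lemma isCompact_polyNbhd : IsCompact (polyNbhd X k m) :=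
  ((isClosed_cubeFin k).inter
    ((Geometry.SimplicialComplex.isCompact_space
      (kuhnComplex_faces_finite (latticeNear_finite X k m))).isClosed.preimage
      ((continuous_coords k).const_smul (m : ℝ)))).isCompact

variable {X k m}

lemma coords_image_polyNbhd (hm : m ≠ 0) :
    coords k '' polyNbhd X k m = ((kuhnComplex (latticeNear X k m)).comap
      (LinearEquiv.smulOfNeZero ℝ (Fin k → ℝ) m (Nat.cast_ne_zero.2 hm))).space := by
  ext p
  rw [Geometry.SimplicialComplex.mem_space_comap, LinearEquiv.smulOfNeZero_apply]
  refine ⟨fun ⟨y, hy, hyp⟩ => hyp ▸ hy.2, fun hp => ?_⟩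
  have hm' : (0 : ℝ) < m := by positivity
  have hI : ∀ i, p i ∈ unitInterval := fun i => by
    have := kuhnComplex_space_subset (convex_pi fun _ _ => convex_Icc 0 (m : ℝ))
      (fun v hv => hv.2.1) hp i (mem_univ i)
    simp only [Pi.smul_apply, smul_eq_mul, mem_Icc] at this
    constructor <;> nlinarith [this.1, this.2]
  set y : Iinf := fun i => if h : i < k then ⟨p ⟨i, h⟩, hI _⟩ else 0
  have hy : coords k y = p := funext fun i => by simp [y, coords]
  exact ⟨y, ⟨fun i hi => by simp [y, hi.not_gt], hy ▸ hp⟩, hy⟩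

lemma exists_dist_lt_of_mem_polyNbhd (hm : m ≠ 0) {y : Iinf} (hy : y ∈ polyNbhd X k m) :
    ∃ x ∈ X, dist (coords k y) (coords k x) < 3 / m := by
  obtain ⟨v, ⟨-, -, x, hx, hvx⟩, hyv⟩ := exists_dist_le_one_of_mem_kuhnComplex_space hy.2
  have hm' : (0 : ℝ) < m := by positivity
  refine ⟨x, hx, (lt_div_iff₀' hm').2 ?_⟩
  calc (m : ℝ) * dist (coords k y) (coords k x)
      = dist ((m : ℝ) • coords k y) ((m : ℝ) • coords k x) := by
        rw [dist_smul₀, Real.norm_natCast]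
    _ ≤ dist ((m : ℝ) • coords k y) v + dist v ((m : ℝ) • coords k x) := dist_triangle _ _ _
    _ < 1 + 2 := add_lt_add_of_le_of_lt hyv hvx
    _ = 3 := by norm_num

lemma nearSet_subset_cyl_polyNbhd (hm : m ≠ 0) : nearSet X k (1 / m) ⊆ cyl k (polyNbhd X k m) := by
  intro z hz
  obtain ⟨x, hx, hzx⟩ := mem_iUnion₂.1 hz
  have hm' : (0 : ℝ) < m := by positivity
  refine ⟨proj_mem_cubeFin k z, ?_⟩
  rw [coords_proj]
  set q := (m : ℝ) • coords k z
  refine mem_kuhnComplex_space_of_kuhnFace_subset fun v hv => ⟨?_, fun i _ => ?_, x, hx, ?_⟩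
  · exact (isKuhnSimplex_kuhnFace q).exists_intCast v hv
  · obtain ⟨h₀, h₁⟩ := floor_le_and_le_ceil_of_mem_kuhnFace hv i
    have hq : q i ∈ Icc 0 (m : ℝ) :=
      ⟨mul_nonneg hm'.le (z i).2.1, mul_le_of_le_one_right hm'.le (z i).2.2⟩
    exact ⟨h₀.trans' (by exact_mod_cast Int.floor_nonneg.2 hq.1),
      h₁.trans (by exact_mod_cast Int.ceil_le.2 (by exact_mod_cast hq.2))⟩
  · calc dist v ((m : ℝ) • coords k x) ≤ dist v q + dist q ((m : ℝ) • coords k x) :=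
          dist_triangle _ _ _
      _ < 1 + 1 := by
          refine add_lt_add (dist_lt_one_of_mem_kuhnFace hv) ?_
          rw [dist_smul₀, Real.norm_natCast, ← lt_div_iff₀' hm']
          exact hzx
      _ = 2 := by norm_num

lemma subset_interior_cyl_polyNbhd (hm : m ≠ 0) : X ⊆ interior (cyl k (polyNbhd X k m)) :=
  (subset_nearSet X k (by positivity)).trans
    (interior_maximal (nearSet_subset_cyl_polyNbhd hm) (isOpen_nearSet X k _))

lemma cyl_polyNbhd_subset_nbhd (hm : m ≠ 0) :
    cyl k (polyNbhd X k m) ⊆ nbhd X (3 / m + 1 / 2 ^ k) := fun z hz => by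
  obtain ⟨x, hx, hzx⟩ := exists_dist_lt_of_mem_polyNbhd hm hz
  rw [coords_proj] at hzx
  exact ⟨x, hx, (rho_le_dist_coords_add z x k).trans_lt (by linarith)⟩

lemma proj_image_polyNbhd_subset_relInterior {k' m' : ℕ} (hm : m ≠ 0) (hm' : m' ≠ 0)
    (hk : k' ≤ k) (hmm : (3 : ℝ) / m ≤ 1 / m') :
    proj k' '' polyNbhd X k m ⊆ relInterior k' (polyNbhd X k' m') := by
  rintro _ ⟨p, hp, rfl⟩
  obtain ⟨x, hx, hpx⟩ := exists_dist_lt_of_mem_polyNbhd hm hp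
  refine ⟨proj_mem_cubeFin k' p, nearSet X k' (1 / m'), isOpen_nearSet X k' _,
    mem_biUnion hx ?_, ?_⟩
  · rw [mem_preimage, coords_proj, Metric.mem_ball]
    exact ((dist_coords_le_of_le hk p x).trans_lt hpx).trans_le hmm
  · rintro w ⟨hw, hwk⟩
    rw [← proj_eq_self hwk]
    exact nearSet_subset_cyl_polyNbhd hm' hw

end PolyNbhd

theorem exists_polyhedral_neighborhood_sequence_general
    (X : Set Iinf) :
    ∃ n : ℕ → ℕ, StrictMono n ∧ n 1 = 1 ∧
      ∃ P : ℕ → Set Iinf,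
        (∀ j : ℕ, 1 ≤ j → IsCompact (P j) ∧ P j ⊆ cubeFin (n j) ∧
          ∃ K : Geometry.SimplicialComplex ℝ (Fin (n j) → ℝ), K.faces.Finite ∧
            (fun (x : Iinf) (i : Fin (n j)) => (x i : ℝ)) '' P j = K.space) ∧
        (∀ j : ℕ, 1 ≤ j →
          X ⊆ interior (cyl (n j) (P j)) ∧ cyl (n j) (P j) ⊆ nbhd X (2 / (j : ℝ))) ∧
        (∀ j : ℕ, 2 ≤ j →
          proj (n (j - 1)) '' P j ⊆ relInterior (n (j - 1)) (P (j - 1))) := by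
  have hm (j : ℕ) : 3 ^ (j + 1) ≠ 0 := pow_ne_zero _ three_ne_zero
  have hmesh (j : ℕ) : (3 : ℝ) / (3 ^ (j + 1) : ℕ) = 1 / 3 ^ j := by
    push_cast
    rw [pow_succ]
    field_simp
  refine ⟨fun j => j, strictMono_id, rfl, fun j => polyNbhd X j (3 ^ (j + 1)),
    fun j _ => ?_, fun j hj => ?_, fun j hj => ?_⟩
  · exact ⟨isCompact_polyNbhd X j _, sep_subset _ _, _,
      Geometry.SimplicialComplex.finite_faces_comap
        (kuhnComplex_faces_finite (latticeNear_finite X j _)),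
      coords_image_polyNbhd (hm j)⟩
  · refine ⟨subset_interior_cyl_polyNbhd (hm j),
      (cyl_polyNbhd_subset_nbhd (hm j)).trans (nbhd_mono ?_)⟩
    have h₁ : (1 : ℝ) / 3 ^ j ≤ 1 / 2 ^ j :=
      one_div_le_one_div_of_le (by positivity) (pow_le_pow_left₀ (by norm_num) (by norm_num) j)
    have h₂ : (1 : ℝ) / 2 ^ j ≤ 1 / j :=
      one_div_le_one_div_of_le (by positivity) (by exact_mod_cast j.lt_two_pow_self.le)
    linarith [hmesh j, show (2 : ℝ) / j = 1 / j + 1 / j by ring]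
  · obtain ⟨i, rfl⟩ : ∃ i, j = i + 1 + 1 := ⟨j - 2, by omega⟩
    refine proj_image_polyNbhd_subset_relInterior (hm _) (hm _) (Nat.sub_le _ _) ?_
    rw [hmesh, Nat.add_sub_cancel]
    push_cast
    rfl

/-- For every nonempty compact `X ⊆ I^∞` there are a strictly increasing
sequence `(n_j)` with `n_1 = 1` and compact polyhedra `P_j ⊆ I^{n_j}` (each the polyhedron of
a finite geometric simplicial complex in `ℝ^{n_j}`) such that
(1) `X ⊆ int_{I^∞}(P_j × I^∞_{n_j})` and `P_j × I^∞_{n_j} ⊆ N(X, 2/j)` for all `j ≥ 1`, and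
(2) `p_{n_{j-1}}^{n_j}(P_j) ⊆ int_{I^{n_{j-1}}}(P_{j-1})` for all `j ≥ 2`. -/
theorem exists_polyhedral_neighborhood_sequence
    (X : Set Iinf) (hXne : X.Nonempty) (hXc : IsCompact X) :
    ∃ n : ℕ → ℕ, StrictMono n ∧ n 1 = 1 ∧
      ∃ P : ℕ → Set Iinf,
        (∀ j : ℕ, 1 ≤ j → IsCompact (P j) ∧ P j ⊆ cubeFin (n j) ∧
          ∃ K : Geometry.SimplicialComplex ℝ (Fin (n j) → ℝ), K.faces.Finite ∧
            (fun (x : Iinf) (i : Fin (n j)) => (x i : ℝ)) '' P j = K.space) ∧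
        (∀ j : ℕ, 1 ≤ j →
          X ⊆ interior (cyl (n j) (P j)) ∧ cyl (n j) (P j) ⊆ nbhd X (2 / (j : ℝ))) ∧
        (∀ j : ℕ, 2 ≤ j →
          proj (n (j - 1)) '' P j ⊆ relInterior (n (j - 1)) (P (j - 1))) :=
  exists_polyhedral_neighborhood_sequence_general X
end
end

section
/- Let X ⊆ I^∞ be compact and nonempty, (n_j) a strictly increasing sequence in ℕ, and (P_j) a sequence of compact subsets P_j ⊆ I^{n_j} such that for all j, X ⊆ int_{I^∞}(P_j × I^∞_{n_j}) ⊆ P_j × I^∞_{n_j} ⊆ N(X, 2/j), and p_{n_j}^{n_{j+1}}(P_{j+1}) ⊆ int_{I^{n_j}}(P_j). Then: (1) for each j ∈ ℕ, P_{j+1} × I^∞_{n_{j+1}} ⊆ int_{I^∞}(P_j × I^∞_{n_j}); and (2) X = ⋂_{j∈ℕ} (P_j × I^∞_{n_j}). -/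
open Set Filter Topology

noncomputable section

/- A point whose `ρ`-distance to `X` is arbitrarily small is a coordinatewise limit of points
of `X`, since `ρ` dominates each coordinate distance up to the factor `2 ^ (i + 1)`. -/

lemma summable_rho_terms (x y : Iinf) :
    Summable fun i : ℕ => |(x i : ℝ) - y i| / 2 ^ (i + 1) := by
  refine summable_geometric_two.of_nonneg_of_le (fun i => by positivity) fun i => ?_
  have hxy : |(x i : ℝ) - y i| ≤ 1 := by
    rw [abs_sub_le_iff]
    constructor <;> linarith [(x i).2.1, (x i).2.2, (y i).2.1, (y i).2.2]
  calc |(x i : ℝ) - y i| / 2 ^ (i + 1) ≤ 1 / 2 ^ (i + 1) := by gcongr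
    _ ≤ 1 / 2 ^ i := by gcongr <;> norm_num
    _ = (1 / 2) ^ i := by rw [one_div_pow]

lemma rho_nonneg (x y : Iinf) : 0 ≤ rho x y :=
  tsum_nonneg fun _ => by positivity

lemma abs_sub_le_rho (x y : Iinf) (i : ℕ) : |(x i : ℝ) - y i| ≤ 2 ^ (i + 1) * rho x y := by
  have h := (summable_rho_terms x y).le_tsum i fun _ _ => by positivity
  rwa [div_le_iff₀ (by positivity), mul_comm] at h

lemma tendsto_of_tendsto_rho_zero {α : Type*} {l : Filter α} {a : α → Iinf} {x : Iinf}
    (h : Tendsto (fun k => rho x (a k)) l (𝓝 0)) : Tendsto a l (𝓝 x) := by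
  refine tendsto_pi_nhds.2 fun i => tendsto_subtype_rng.2 (tendsto_iff_dist_tendsto_zero.2 ?_)
  have hbound := h.const_mul ((2 : ℝ) ^ (i + 1))
  rw [mul_zero] at hbound
  refine squeeze_zero (fun _ => dist_nonneg) (fun k => ?_) hbound
  rw [Real.dist_eq, abs_sub_comm]
  exact abs_sub_le_rho x (a k) i

lemma IsClosed.mem_of_forall_mem_nbhd {X : Set Iinf} (hX : IsClosed X) {x : Iinf}
    (h : ∀ ε > 0, x ∈ nbhd X ε) : x ∈ X := by
  choose a haX hxa using fun k : ℕ => h (1 / (k + 1)) Nat.one_div_pos_of_nat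
  refine hX.mem_of_tendsto (tendsto_of_tendsto_rho_zero (l := atTop) ?_) (Eventually.of_forall haX)
  exact squeeze_zero (fun k => rho_nonneg x (a k)) (fun k => (hxa k).le)
    tendsto_one_div_add_atTop_nhds_zero_nat

lemma continuous_proj (k : ℕ) : Continuous (proj k) :=
  continuous_pi fun i => by
    by_cases h : i < k
    · simpa [proj, h] using continuous_apply i
    · simpa [proj, h] using continuous_const

lemma proj_proj_of_le {k m : ℕ} (hkm : k ≤ m) (x : Iinf) : proj k (proj m x) = proj k x := by
  funext i
  by_cases h : i < k
  · simp [proj, h, h.trans_le hkm]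
  · simp [proj, h]

lemma cyl_subset_interior_cyl {k m : ℕ} (hkm : k ≤ m) {P Q : Set Iinf}
    (h : proj k '' Q ⊆ relInterior k P) : cyl m Q ⊆ interior (cyl k P) := by
  intro x hx
  obtain ⟨-, U, hUo, hxU, hUP⟩ := h ⟨proj m x, hx, proj_proj_of_le hkm x⟩
  exact mem_interior.2 ⟨proj k ⁻¹' U, fun y hy => hUP ⟨hy, proj_mem_cubeFin k y⟩,
    hUo.preimage (continuous_proj k), hxU⟩

theorem cylinder_chain_and_intersection_general
    (X : Set Iinf) (hXc : IsCompact X)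
    (n : ℕ → ℕ) (hn : StrictMono n)
    (P : ℕ → Set Iinf)
    (hint : ∀ j : ℕ, 1 ≤ j → X ⊆ interior (cyl (n j) (P j)))
    (hnbhd : ∀ j : ℕ, 1 ≤ j → cyl (n j) (P j) ⊆ nbhd X (2 / (j : ℝ)))
    (hchain : ∀ j : ℕ, 1 ≤ j → proj (n j) '' P (j + 1) ⊆ relInterior (n j) (P j)) :
    (∀ j : ℕ, 1 ≤ j → cyl (n (j + 1)) (P (j + 1)) ⊆ interior (cyl (n j) (P j))) ∧
      X = ⋂ j ∈ Set.Ici 1, cyl (n j) (P j) := by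
  refine ⟨fun j hj => cyl_subset_interior_cyl (hn j.lt_succ_self).le (hchain j hj), ?_⟩
  refine (subset_iInter₂ fun j hj => (hint j hj).trans interior_subset).antisymm
    fun x hx => hXc.isClosed.mem_of_forall_mem_nbhd fun ε hε => ?_
  obtain ⟨j, hj⟩ := exists_nat_gt (2 / ε)
  have hj_pos : (0 : ℝ) < j := (div_pos two_pos hε).trans hj
  have hj1 : 1 ≤ j := Nat.cast_pos.mp hj_pos
  have hjε : 2 / (j : ℝ) < ε := by rwa [div_lt_comm₀ hj_pos hε]
  obtain ⟨a, haX, hxa⟩ := hnbhd j hj1 (mem_iInter₂.mp hx j hj1)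
  exact ⟨a, haX, hxa.trans hjε⟩

/-- Given nonempty compact `X ⊆ I^∞`, a strictly increasing sequence `(n_j)`,
and compact `P_j ⊆ I^{n_j}` with `X ⊆ int_{I^∞}(P_j × I^∞_{n_j})`,
`P_j × I^∞_{n_j} ⊆ N(X, 2/j)` and `p_{n_j}^{n_{j+1}}(P_{j+1}) ⊆ int_{I^{n_j}}(P_j)`:
(1) `P_{j+1} × I^∞_{n_{j+1}} ⊆ int_{I^∞}(P_j × I^∞_{n_j})` for every `j`, and
(2) `X = ⋂_j (P_j × I^∞_{n_j})`. -/
theorem cylinder_chain_and_intersection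
    (X : Set Iinf) (hXne : X.Nonempty) (hXc : IsCompact X)
    (n : ℕ → ℕ) (hn : StrictMono n)
    (P : ℕ → Set Iinf) (hPc : ∀ j : ℕ, 1 ≤ j → IsCompact (P j))
    (hPcube : ∀ j : ℕ, 1 ≤ j → P j ⊆ cubeFin (n j))
    (hint : ∀ j : ℕ, 1 ≤ j → X ⊆ interior (cyl (n j) (P j)))
    (hnbhd : ∀ j : ℕ, 1 ≤ j → cyl (n j) (P j) ⊆ nbhd X (2 / (j : ℝ)))
    (hchain : ∀ j : ℕ, 1 ≤ j → proj (n j) '' P (j + 1) ⊆ relInterior (n j) (P j)) :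
    (∀ j : ℕ, 1 ≤ j → cyl (n (j + 1)) (P (j + 1)) ⊆ interior (cyl (n j) (P j))) ∧
      X = ⋂ j ∈ Set.Ici 1, cyl (n j) (P j) :=
  cylinder_chain_and_intersection_general X hXc n hn P hint hnbhd hchain
end
end

section
/- Let X ⊆ I^∞ be compact and nonempty, let (m_i) be a strictly increasing sequence in ℕ, let M_i ⊆ I^{m_i} be nonempty compact sets, and let h_i : M_{i+1} → M_i be continuous maps such that ρ(h_i(u), p_{m_i,∞}(u)) < 2^{-m_i} for all u ∈ M_{i+1} (points of M_i viewed in I^∞ via the identification I^{m_i} ⊆ I^∞). Suppose there are η_i > 0 with η_i → 0 such that M_i ⊆ N(X, η_i) for every i (as subsets of I^∞). Let M = lim (M_i, h_i). Then: (1) for every thread w = (a_1, a_2, …) ∈ M, ρ(a_i, a_{i+1}) < 2^{1−m_i} for all i, so (a_i) is a Cauchy sequence in (I^∞, ρ) whose limit lies in X; and (2) the function π : M → I^∞ sending each thread to the limit of its associated sequence is continuous, with π(M) ⊆ X. -/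
open Set Filter Topology

noncomputable section

/-! The consecutive terms of a thread are `2^{1-m_i} ≤ 2^{1-i}` apart, so a thread is
`ρ`-Cauchy at a geometric rate that does not depend on the thread. Since `ρ` is continuous on
the compact space `I^∞`, such a sequence converges to a cluster point, at the same rate; this
uniform rate makes `π` a uniform limit of the continuous coordinate maps `w ↦ a_i`. Finally
`a_i ∈ N(X, η_i)` with `η_i → 0` puts the limit in the closed set `X`. -/

lemma rho_term_le (x y : Iinf) (i : ℕ) : |(x i : ℝ) - y i| / 2 ^ (i + 1) ≤ 1 / 2 / 2 ^ i := by
  have hxy : |(x i : ℝ) - y i| ≤ 1 :=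
    abs_sub_le_of_nonneg_of_le (x i).2.1 (x i).2.2 (y i).2.1 (y i).2.2
  calc |(x i : ℝ) - y i| / 2 ^ (i + 1) ≤ 1 / 2 ^ (i + 1) := by gcongr
    _ = 1 / 2 / 2 ^ i := by ring

lemma summable_rho_term (x y : Iinf) : Summable fun i => |(x i : ℝ) - y i| / 2 ^ (i + 1) :=
  (summable_geometric_two' 1).of_nonneg_of_le (fun _ => by positivity) (rho_term_le x y)

lemma rho_comm (x y : Iinf) : rho x y = rho y x :=
  tsum_congr fun _ => by rw [abs_sub_comm]

lemma rho_self (x : Iinf) : rho x x = 0 := by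
  simp [rho]

lemma rho_triangle (x y z : Iinf) : rho x z ≤ rho x y + rho y z := by
  rw [rho, rho, rho, ← (summable_rho_term x y).tsum_add (summable_rho_term y z)]
  refine (summable_rho_term x z).tsum_le_tsum (fun i => ?_)
    ((summable_rho_term x y).add (summable_rho_term y z))
  rw [← add_div]
  gcongr
  exact abs_sub_le _ _ _

lemma dist_le_two_pow_mul_rho (x y : Iinf) (j : ℕ) : dist (x j) (y j) ≤ 2 ^ (j + 1) * rho x y := by
  have hj := (summable_rho_term x y).le_tsum j fun i _ => by positivity
  rw [div_le_iff₀ (by positivity)] at hj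
  rw [Subtype.dist_eq, Real.dist_eq, mul_comm]
  exact hj

lemma rho_le_of_eq_of_lt {x y : Iinf} {k : ℕ} (hxy : ∀ i < k, x i = y i) : rho x y ≤ 1 / 2 ^ k := by
  have head : ∑ i ∈ Finset.range k, |(x i : ℝ) - y i| / 2 ^ (i + 1) = 0 :=
    Finset.sum_eq_zero fun i hi => by rw [hxy i (Finset.mem_range.1 hi), sub_self, abs_zero, zero_div]
  rw [rho, ← (summable_rho_term x y).sum_add_tsum_nat_add k, head, zero_add,
    ← tsum_geometric_two' (1 / 2 ^ k)]
  refine ((summable_nat_add_iff k).2 (summable_rho_term x y)).tsum_le_tsum (fun i => ?_)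
    (summable_geometric_two' _)
  calc _ ≤ 1 / 2 / 2 ^ (i + k) := rho_term_le x y (i + k)
    _ = 1 / 2 ^ k / 2 / 2 ^ i := by rw [pow_add]; ring

lemma continuous_rho : Continuous fun p : Iinf × Iinf => rho p.1 p.2 :=
  continuous_tsum (fun i => by fun_prop) (summable_geometric_two' 1) fun i p => by
    rw [Real.norm_of_nonneg (by positivity)]
    exact rho_term_le p.1 p.2 i

lemma tendsto_rho {ι : Type*} {l : Filter ι} {a b : ι → Iinf} {x y : Iinf}
    (ha : Tendsto a l (𝓝 x)) (hb : Tendsto b l (𝓝 y)) :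
    Tendsto (fun i => rho (a i) (b i)) l (𝓝 (rho x y)) :=
  ((continuous_rho.tendsto (x, y)).comp (ha.prodMk_nhds hb) :)

lemma tendstoUniformly_coord_of_rho_le {α ι : Type*} {l : Filter ι} {F : ι → α → Iinf}
    {G : α → Iinf} {δ : ι → ℝ} (hδ : Tendsto δ l (𝓝 0)) (hFG : ∀ i a, rho (F i a) (G a) ≤ δ i)
    (j : ℕ) : TendstoUniformly (fun i a => F i a j) (fun a => G a j) l := by
  rw [Metric.tendstoUniformly_iff]
  intro ε hε
  have hδj : Tendsto (fun i => 2 ^ (j + 1) * δ i) l (𝓝 0) := by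
    simpa using hδ.const_mul ((2 : ℝ) ^ (j + 1))
  filter_upwards [hδj.eventually_lt_const hε] with i hi a
  calc dist (G a j) (F i a j) ≤ 2 ^ (j + 1) * rho (G a) (F i a) := dist_le_two_pow_mul_rho _ _ j
    _ ≤ 2 ^ (j + 1) * δ i := by rw [rho_comm]; gcongr; exact hFG i a
    _ < ε := hi

lemma tendsto_of_tendsto_rho {ι : Type*} {l : Filter ι} {a : ι → Iinf} {x : Iinf}
    (hax : Tendsto (fun i => rho (a i) x) l (𝓝 0)) : Tendsto a l (𝓝 x) :=
  tendsto_pi_nhds.2 fun j =>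
    (tendstoUniformly_coord_of_rho_le (F := fun i (_ : Unit) => a i) (G := fun _ => x) hax
      (fun _ _ => le_rfl) j).tendsto_at ()

lemma continuous_of_rho_le {α ι : Type*} [TopologicalSpace α] {l : Filter ι} [l.NeBot]
    {F : ι → α → Iinf} {G : α → Iinf} {δ : ι → ℝ} (hF : ∀ i, Continuous (F i))
    (hδ : Tendsto δ l (𝓝 0)) (hFG : ∀ i a, rho (F i a) (G a) ≤ δ i) : Continuous G :=
  continuous_pi fun j => (tendstoUniformly_coord_of_rho_le hδ hFG j).continuous
    (Frequently.of_forall fun i => (continuous_apply j).comp (hF i))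

lemma rho_le_of_rho_succ_le {a : ℕ → Iinf} {C : ℝ} (ha : ∀ n, rho (a n) (a (n + 1)) ≤ C / 2 ^ n)
    {p q : ℕ} (hpq : p ≤ q) : rho (a p) (a q) ≤ 2 * C / 2 ^ p - 2 * C / 2 ^ q := by
  induction q, hpq using Nat.le_induction with
  | base => simp [rho_self]
  | succ q _ ih =>
    calc rho (a p) (a (q + 1)) ≤ rho (a p) (a q) + rho (a q) (a (q + 1)) := rho_triangle _ _ _
      _ ≤ 2 * C / 2 ^ p - 2 * C / 2 ^ q + C / 2 ^ q := add_le_add ih (ha q)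
      _ = 2 * C / 2 ^ p - 2 * C / 2 ^ (q + 1) := by rw [pow_succ]; ring

lemma exists_tendsto_of_rho_le {a : ℕ → Iinf} {δ : ℕ → ℝ} (hδ : Tendsto δ atTop (𝓝 0))
    (ha : ∀ p q, p ≤ q → rho (a p) (a q) ≤ δ p) :
    ∃ l, Tendsto a atTop (𝓝 l) ∧ ∀ p, rho (a p) l ≤ δ p := by
  obtain ⟨l, φ, hφ, hl⟩ := CompactSpace.tendsto_subseq a
  have hrate : ∀ p, rho (a p) l ≤ δ p := fun p =>
    le_of_tendsto (tendsto_rho tendsto_const_nhds hl)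
      ((hφ.tendsto_atTop.eventually_ge_atTop p).mono fun k hk => ha p (φ k) hk)
  exact ⟨l, tendsto_of_tendsto_rho (squeeze_zero (fun p => rho_nonneg _ _) hrate hδ), hrate⟩

lemma rho_cauchy_of_tendsto {a : ℕ → Iinf} {l : Iinf} (ha : Tendsto a atTop (𝓝 l)) {ε : ℝ}
    (hε : 0 < ε) : ∃ N, ∀ p, N ≤ p → ∀ q, N ≤ q → rho (a p) (a q) < ε := by
  have hal : Tendsto (fun p => rho (a p) l) atTop (𝓝 0) := by
    simpa [rho_self] using tendsto_rho ha (tendsto_const_nhds (x := l))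
  obtain ⟨N, hN⟩ := eventually_atTop.1 (hal.eventually_lt_const (half_pos hε))
  refine ⟨N, fun p hp q hq => ?_⟩
  have hpq := rho_triangle (a p) l (a q)
  rw [rho_comm l] at hpq
  linarith [hN p hp, hN q hq]

lemma mem_of_tendsto_of_mem_nbhd {ι : Type*} {l : Filter ι} [l.NeBot] {X : Set Iinf}
    (hX : IsClosed X) {a : ι → Iinf} {x : Iinf} {η : ι → ℝ} (hη : Tendsto η l (𝓝 0))
    (hax : Tendsto a l (𝓝 x)) (haX : ∀ i, a i ∈ nbhd X (η i)) : x ∈ X := by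
  choose b hbX hab using haX
  have hax' : Tendsto (fun i => rho (a i) x) l (𝓝 0) := by
    simpa [rho_self] using tendsto_rho hax (tendsto_const_nhds (x := x))
  have hbx : Tendsto (fun i => rho (b i) x) l (𝓝 0) := by
    refine squeeze_zero (fun i => rho_nonneg _ _) (fun i => ?_) (by simpa using hη.add hax')
    calc rho (b i) x ≤ rho (b i) (a i) + rho (a i) x := rho_triangle _ _ _
      _ ≤ η i + rho (a i) x := by rw [rho_comm]; exact add_le_add_left (hab i).le _
  exact hX.mem_of_tendsto (tendsto_of_tendsto_rho hbx) (Eventually.of_forall hbX)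

lemma rho_lt_of_rho_proj_lt {x y : Iinf} {k : ℕ} (hy : rho y (proj k x) < 1 / 2 ^ k) :
    rho y x < 2 / 2 ^ k := by
  have hproj : rho (proj k x) x ≤ 1 / 2 ^ k := rho_le_of_eq_of_lt fun i hi => if_pos hi
  have hk : (2 : ℝ) / 2 ^ k = 1 / 2 ^ k + 1 / 2 ^ k := by ring
  linarith [rho_triangle y (proj k x) x]

abbrev InverseLimit (M : ℕ → Set Iinf) (h : ∀ i, M (i + 1) → Iinf) : Type :=
  {a : ∀ i, M i // ∀ i, h i (a (i + 1)) = (a i : Iinf)}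

namespace InverseLimit

variable {M : ℕ → Set Iinf} {h : ∀ i, M (i + 1) → Iinf} {m : ℕ → ℕ}

lemma rho_succ_lt (hh : ∀ i (u : M (i + 1)), rho (h i u) (proj (m i) (u : Iinf)) < 1 / 2 ^ m i)
    (w : InverseLimit M h) (i : ℕ) : rho (w.1 i : Iinf) (w.1 (i + 1)) < 2 / 2 ^ m i :=
  rho_lt_of_rho_proj_lt (w.2 i ▸ hh i (w.1 (i + 1)))

lemma rho_le (hm : StrictMono m)
    (hh : ∀ i (u : M (i + 1)), rho (h i u) (proj (m i) (u : Iinf)) < 1 / 2 ^ m i)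
    (w : InverseLimit M h) {p q : ℕ} (hpq : p ≤ q) : rho (w.1 p : Iinf) (w.1 q) ≤ 4 / 2 ^ p := by
  have hsucc : ∀ n, rho (w.1 n : Iinf) (w.1 (n + 1)) ≤ 2 / 2 ^ n := fun n =>
    (rho_succ_lt hh w n).le.trans (by gcongr; exacts [one_le_two, hm.le_apply])
  have hpq' := rho_le_of_rho_succ_le hsucc hpq
  have : (0 : ℝ) < 2 * 2 / 2 ^ q := by positivity
  linarith

lemma continuous_apply (p : ℕ) : Continuous fun w : InverseLimit M h => (w.1 p : Iinf) :=
  continuous_subtype_val.comp ((_root_.continuous_apply p).comp continuous_subtype_val)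

end InverseLimit

theorem thread_limits_lie_in_X_general
    (X : Set Iinf) (hXc : IsCompact X)
    (m : ℕ → ℕ) (hm : StrictMono m)
    (M : ℕ → Set Iinf)
    (η : ℕ → ℝ) (hη0 : Tendsto η atTop (𝓝 0))
    (hMX : ∀ i, M i ⊆ nbhd X (η i))
    (h : ∀ i, M (i + 1) → Iinf)
    (hhclose : ∀ i (u : M (i + 1)), rho (h i u) (proj (m i) (u : Iinf)) < 1 / 2 ^ m i) :
    (∀ w : {a : ∀ i, M i // ∀ i, h i (a (i + 1)) = (a i : Iinf)},
      (∀ i, rho (w.1 i : Iinf) (w.1 (i + 1) : Iinf) < 2 / 2 ^ m i) ∧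
      (∀ ε : ℝ, 0 < ε → ∃ N : ℕ, ∀ p, N ≤ p → ∀ q, N ≤ q →
        rho (w.1 p : Iinf) (w.1 q : Iinf) < ε) ∧
      ∃ l ∈ X, Tendsto (fun i => (w.1 i : Iinf)) atTop (𝓝 l)) ∧
    ∃ π : {a : ∀ i, M i // ∀ i, h i (a (i + 1)) = (a i : Iinf)} → Iinf,
      Continuous π ∧
      (∀ w, Tendsto (fun i => (w.1 i : Iinf)) atTop (𝓝 (π w))) ∧
      ∀ w, π w ∈ X := by
  have hrate : Tendsto (fun p : ℕ => (4 : ℝ) / 2 ^ p) atTop (𝓝 0) :=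
    tendsto_const_nhds.div_atTop (tendsto_pow_atTop_atTop_of_one_lt one_lt_two)
  choose π hπ hπrate using fun w : InverseLimit M h =>
    exists_tendsto_of_rho_le hrate fun _ _ => InverseLimit.rho_le hm hhclose w
  have hπX : ∀ w, π w ∈ X := fun w =>
    mem_of_tendsto_of_mem_nbhd hXc.isClosed hη0 (hπ w) fun i => hMX i (w.1 i).2
  refine ⟨fun w => ⟨InverseLimit.rho_succ_lt hhclose w, fun ε hε => rho_cauchy_of_tendsto (hπ w) hε,
    π w, hπX w, hπ w⟩, π, ?_, hπ, hπX⟩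
  exact continuous_of_rho_le InverseLimit.continuous_apply hrate fun p w => hπrate w p

/-- Let `X ⊆ I^∞` be compact nonempty, `(m_i)` strictly increasing,
`M_i ⊆ I^{m_i}` nonempty compact with `M_i ⊆ N(X, η_i)` where `η_i → 0`, and
`h_i : M_{i+1} → M_i` continuous with `ρ(h_i u, p_{m_i,∞} u) < 2^{-m_i}`.  Let
`M = lim (M_i, h_i)`.  Then (1) for every thread `w = (a_i) ∈ M` one has
`ρ(a_i, a_{i+1}) < 2^{1 − m_i}`, so `(a_i)` is `ρ`-Cauchy and converges to a point of `X`;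
and (2) the map `π : M → I^∞` sending a thread to the limit of its associated sequence is
continuous with `π(M) ⊆ X`. -/
theorem thread_limits_lie_in_X
    (X : Set Iinf) (hXne : X.Nonempty) (hXc : IsCompact X)
    (m : ℕ → ℕ) (hm : StrictMono m)
    (M : ℕ → Set Iinf) (hMne : ∀ i, (M i).Nonempty) (hMc : ∀ i, IsCompact (M i))
    (hMcube : ∀ i, M i ⊆ cubeFin (m i))
    (η : ℕ → ℝ) (hη : ∀ i, 0 < η i) (hη0 : Tendsto η atTop (𝓝 0))
    (hMX : ∀ i, M i ⊆ nbhd X (η i))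
    (h : ∀ i, M (i + 1) → Iinf) (hhc : ∀ i, Continuous (h i))
    (hhmem : ∀ i u, h i u ∈ M i)
    (hhclose : ∀ i (u : M (i + 1)), rho (h i u) (proj (m i) (u : Iinf)) < 1 / 2 ^ m i) :
    (∀ w : {a : ∀ i, M i // ∀ i, h i (a (i + 1)) = (a i : Iinf)},
      (∀ i, rho (w.1 i : Iinf) (w.1 (i + 1) : Iinf) < 2 / 2 ^ m i) ∧
      (∀ ε : ℝ, 0 < ε → ∃ N : ℕ, ∀ p, N ≤ p → ∀ q, N ≤ q →
        rho (w.1 p : Iinf) (w.1 q : Iinf) < ε) ∧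
      ∃ l ∈ X, Tendsto (fun i => (w.1 i : Iinf)) atTop (𝓝 l)) ∧
    ∃ π : {a : ∀ i, M i // ∀ i, h i (a (i + 1)) = (a i : Iinf)} → Iinf,
      Continuous π ∧
      (∀ w, Tendsto (fun i => (w.1 i : Iinf)) atTop (𝓝 (π w))) ∧
      ∀ w, π w ∈ X :=
  thread_limits_lie_in_X_general X hXc m hm M η hη0 hMX h hhclose
end
end
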